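/- arXiv:2403.07298 — 4 statements merged into one kernel-verified Lean document; each statement's English description precedes it below -/
import Mathlib

section
/- The integral from 0 to 1 of K(2√(x(1-x))) dx equals π²/4, where K is the complete elliptic integral of the first kind. -/
open MeasureTheory Real Filter
open Topology

/-- Pochhammer symbol `(x)_n`. -/
noncomputable def poch (x : ℝ) (n : ℕ) : ℝ := ∏ i ∈ Finset.range n, (x + i)

/-- Complete elliptic integral of the first kind. -/
noncomputable def K (k : ℝ) : ℝ :=
  ∫ θ in Set.Ioo 0 (Real.pi / 2), 1 / Real.sqrt (1 - k ^ 2 * Real.sin θ ^ 2)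

/-- `K` as a function of the squared modulus, via the hypergeometric series
`K(k) = (π/2) ₂F₁(1/2,1/2;1;k²)`. -/
noncomputable def Ksq (m : ℝ) : ℝ :=
  (Real.pi / 2) * ∑' n : ℕ, poch (1/2) n ^ 2 / poch 1 n ^ 2 * m ^ n

/-- Legendre polynomial `P_n(x)`. -/
noncomputable def P (n : ℕ) (x : ℝ) : ℝ :=
  (1 / 2 ^ n) * ∑ k ∈ Finset.range (n + 1), (n.choose k : ℝ) ^ 2 * (x - 1) ^ (n - k) * (x + 1) ^ k
lemma denom_pos {s : ℝ} (hs1 : s^2 < 1) (x : ℝ) : 0 < 1 - 4*x*(1-x)*s^2 := by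
  nlinarith [sq_nonneg ((2*x-1)*s), sq_nonneg s]

lemma cont_integrand1 {s : ℝ} (hs1 : s^2 < 1) :
    Continuous fun x : ℝ => (Real.sqrt (1 - 4*x*(1-x)*s^2))⁻¹ := by
  apply Continuous.inv₀
  · exact Real.continuous_sqrt.comp (by continuity)
  · intro x
    exact ne_of_gt (Real.sqrt_pos.2 (denom_pos hs1 x))

lemma lemA {s : ℝ} (hs : 0 < s) (hs1 : s < 1) :
    ∫ x in (0:ℝ)..1, (Real.sqrt (1 - 4*x*(1-x)*s^2))⁻¹
      = (Real.log (1+s) - Real.log (1-s)) / (2*s) := by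
  have hs2 : s^2 < 1 := by nlinarith
  set c : ℝ := Real.sqrt (1 - s^2) with hc
  have hcpos : 0 < c := Real.sqrt_pos.2 (by nlinarith)
  have hcne : c ≠ 0 := ne_of_gt hcpos
  have hcsq : c^2 = 1 - s^2 := Real.sq_sqrt (by nlinarith)
  have hderiv : ∀ x ∈ Set.uIcc (0:ℝ) 1,
      HasDerivAt (fun x : ℝ => (2*s)⁻¹ * Real.arsinh ((2*x-1)*(s/c)))
        ((Real.sqrt (1 - 4*x*(1-x)*s^2))⁻¹) x := by
    intro x _
    have hlin : HasDerivAt (fun x : ℝ => (2*x-1)*(s/c)) (2*(s/c)) x := by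
      simpa using ((hasDerivAt_id x).const_mul 2 |>.sub_const 1).mul_const (s/c)
    have h2 := ((Real.hasDerivAt_arsinh ((2*x-1)*(s/c))).comp x hlin).const_mul (2*s)⁻¹
    refine h2.congr_deriv (Eq.symm ?_)
    have key : 1 - 4*x*(1-x)*s^2 = c^2 * (1+((2*x-1)*(s/c))^2) := by
      have h3 : c^2*(1+((2*x-1)*(s/c))^2) = c^2 + (2*x-1)^2*s^2 := by
        field_simp
      rw [h3, hcsq]; ring
    have hupos : (0:ℝ) < 1+((2*x-1)*(s/c))^2 := by positivity
    rw [key, Real.sqrt_mul (sq_nonneg c), Real.sqrt_sq hcpos.le]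
    rw [mul_inv]
    field_simp
  have hint : IntervalIntegrable (fun x : ℝ => (Real.sqrt (1 - 4*x*(1-x)*s^2))⁻¹)
      volume 0 1 := (cont_integrand1 hs2).intervalIntegrable 0 1
  rw [intervalIntegral.integral_eq_sub_of_hasDerivAt hderiv hint]
  have harsinh : Real.arsinh (s/c) = Real.log ((1+s)/c) := by
    rw [Real.arsinh]
    congr 1
    have : 1 + (s/c)^2 = (1/c)^2 := by
      field_simp
      nlinarith [hcsq]
    rw [this, Real.sqrt_sq (by positivity)]
    field_simp
    ring
  have hlogc : Real.log c = (Real.log (1-s) + Real.log (1+s))/2 := by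
    rw [hc, Real.log_sqrt (by nlinarith)]
    rw [show (1:ℝ) - s^2 = (1-s)*(1+s) by ring,
      Real.log_mul (by nlinarith) (by nlinarith)]
  have h0 : ((2:ℝ)*0-1) = -1 := by norm_num
  simp only [show ((2:ℝ)*1-1) = 1 by norm_num, h0, one_mul, neg_one_mul,
    Real.arsinh_neg, harsinh]
  rw [Real.log_div (by nlinarith) hcne, hlogc]
  field_simp
  ring

lemma lemB {s : ℝ} (hs : 0 < s) (hs1 : s < 1) :
    ∫ t in (0:ℝ)..1, (1 - t^2*s^2)⁻¹
      = (Real.log (1+s) - Real.log (1-s)) / (2*s) := by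
  have huIcc : Set.uIcc (0:ℝ) 1 = Set.Icc 0 1 := Set.uIcc_of_le zero_le_one
  have hbound : ∀ t ∈ Set.Icc (0:ℝ) 1, 0 < 1 - t*s ∧ 0 < 1 + t*s := by
    rintro t ⟨ht0, ht1⟩
    constructor <;> nlinarith
  have hderiv : ∀ t ∈ Set.uIcc (0:ℝ) 1,
      HasDerivAt (fun t : ℝ => (2*s)⁻¹ * (Real.log (1+t*s) - Real.log (1-t*s)))
        ((1 - t^2*s^2)⁻¹) t := by
    intro t ht
    rw [huIcc] at ht
    obtain ⟨h1, h2⟩ := hbound t ht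
    have d1 : HasDerivAt (fun t : ℝ => Real.log (1+t*s)) (s/(1+t*s)) t := by
      have hl : HasDerivAt (fun t : ℝ => 1+t*s) s t := by
        simpa using ((hasDerivAt_id t).mul_const s).const_add 1
      simpa [div_eq_inv_mul, mul_comm, Function.comp_def] using (Real.hasDerivAt_log (ne_of_gt h2)).comp t hl
    have d2 : HasDerivAt (fun t : ℝ => Real.log (1-t*s)) (-s/(1-t*s)) t := by
      have hl : HasDerivAt (fun t : ℝ => 1-t*s) (-s) t := by
        simpa using ((hasDerivAt_id t).mul_const s).const_sub 1
      have := (Real.hasDerivAt_log (ne_of_gt h1)).comp t hl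
      simpa [div_eq_inv_mul, mul_comm, Function.comp_def] using this
    have h3 := ((d1.sub d2).const_mul (2*s)⁻¹)
    refine h3.congr_deriv (Eq.symm ?_)
    have h4 : (0:ℝ) < 1 - t^2*s^2 := by nlinarith
    field_simp
    ring
  have hcont : ContinuousOn (fun t : ℝ => (1 - t^2*s^2)⁻¹) (Set.uIcc 0 1) := by
    rw [huIcc]
    apply ContinuousOn.inv₀ (by fun_prop)
    rintro t ht
    obtain ⟨h1, h2⟩ := hbound t ht
    nlinarith
  rw [intervalIntegral.integral_eq_sub_of_hasDerivAt hderiv (hcont.intervalIntegrable)]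
  simp only [one_mul, zero_mul, add_zero, sub_zero, Real.log_one, sub_zero]
  field_simp
  ring

lemma lemC_fin {t : ℝ} (ht : 0 < t) (ht1 : t < 1) {b : ℝ} (hb0 : 0 ≤ b) (hb : b < π/2) :
    ∫ θ in (0:ℝ)..b, (1 - t^2 * Real.sin θ^2)⁻¹
      = (Real.sqrt (1-t^2))⁻¹ * Real.arctan (Real.sqrt (1-t^2) * Real.tan b) := by
  set c : ℝ := Real.sqrt (1-t^2) with hc
  have hcpos : 0 < c := Real.sqrt_pos.2 (by nlinarith)
  have hcsq : c^2 = 1 - t^2 := Real.sq_sqrt (by nlinarith)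
  have hderiv : ∀ θ ∈ Set.uIcc (0:ℝ) b,
      HasDerivAt (fun θ : ℝ => c⁻¹ * Real.arctan (c * Real.tan θ))
        ((1 - t^2 * Real.sin θ^2)⁻¹) θ := by
    intro θ hθ
    rw [Set.uIcc_of_le hb0] at hθ
    have hcos : 0 < Real.cos θ := Real.cos_pos_of_mem_Ioo
      ⟨lt_of_lt_of_le (by linarith [Real.pi_pos]) hθ.1, lt_of_le_of_lt hθ.2 hb⟩
    have htan : HasDerivAt Real.tan (1 / Real.cos θ^2) θ := Real.hasDerivAt_tan (ne_of_gt hcos)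
    have h1 := ((Real.hasDerivAt_arctan (c * Real.tan θ)).comp θ (htan.const_mul c)).const_mul c⁻¹
    refine h1.congr_deriv (Eq.symm ?_)
    rw [Real.tan_eq_sin_div_cos]
    have hsc : Real.sin θ^2 = 1 - Real.cos θ^2 := by
      have := Real.sin_sq_add_cos_sq θ; linarith
    have hd : 0 < 1 - t^2*Real.sin θ^2 := by nlinarith [Real.sin_sq_le_one θ]
    field_simp
    linear_combination Real.sin θ^2 * hcsq + hsc
  have hcont : Continuous fun θ : ℝ => (1 - t^2 * Real.sin θ^2)⁻¹ := by
    apply Continuous.inv₀ (by continuity)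
    intro θ
    nlinarith [Real.sin_sq_le_one θ]
  rw [intervalIntegral.integral_eq_sub_of_hasDerivAt hderiv (hcont.intervalIntegrable 0 b)]
  simp [Real.tan_zero, Real.arctan_zero]

lemma lemC {t : ℝ} (ht : 0 < t) (ht1 : t < 1) :
    ∫ θ in Set.Ioo 0 (π/2), (1 - t^2 * Real.sin θ^2)⁻¹
      = (π/2) * (Real.sqrt (1-t^2))⁻¹ := by
  set c : ℝ := Real.sqrt (1-t^2) with hc
  have hcpos : 0 < c := Real.sqrt_pos.2 (by nlinarith)
  have hpi : 0 < π/2 := by positivity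
  set b : ℕ → ℝ := fun n => π/2 - (π/2)/(n+1) with hbdef
  have hblt : ∀ n, b n < π/2 := fun n => by
    have : 0 < (π/2)/(n+1) := by positivity
    simp only [hbdef]; linarith
  have hb0 : ∀ n, 0 ≤ b n := fun n => by
    have h1 : (π/2)/(n+1) ≤ (π/2)/1 := by
      apply div_le_div_of_nonneg_left hpi.le one_pos
      exact_mod_cast Nat.le_add_left 1 n
    simp only [hbdef]; rw [div_one] at h1; linarith
  have hbmono : Monotone b := by
    intro m n hmn
    have : (π/2)/(n+1) ≤ (π/2)/(m+1) := by
      apply div_le_div_of_nonneg_left hpi.le (by positivity)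
      exact_mod_cast Nat.add_le_add_right hmn 1
    simp only [hbdef]; linarith
  have hbtend : Tendsto b atTop (𝓝 (π/2)) := by
    have h1 : Tendsto (fun n : ℕ => (π/2) * (1/(n+1))) atTop (𝓝 ((π/2) * 0)) :=
      tendsto_one_div_add_atTop_nhds_zero_nat.const_mul _
    have h2 : Tendsto (fun n : ℕ => (π/2)/(n+1)) atTop (𝓝 0) := by
      simpa [div_eq_mul_inv, one_div] using h1
    simpa using tendsto_const_nhds.sub h2
  have hcont : Continuous fun θ : ℝ => (1 - t^2 * Real.sin θ^2)⁻¹ := by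
    apply Continuous.inv₀ (by continuity)
    intro θ
    nlinarith [Real.sin_sq_le_one θ]
  have hInt : IntegrableOn (fun θ : ℝ => (1 - t^2 * Real.sin θ^2)⁻¹) (Set.Ioo 0 (π/2)) := by
    exact (hcont.integrableOn_Icc).mono_set Set.Ioo_subset_Icc_self
  have hUnion : (⋃ n, Set.Ioo (0:ℝ) (b n)) = Set.Ioo 0 (π/2) := by
    apply Set.Subset.antisymm
    · exact Set.iUnion_subset fun n => Set.Ioo_subset_Ioo le_rfl (hblt n).le
    · intro x hx
      have : ∀ᶠ n in (atTop : Filter ℕ), x < b n :=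
        hbtend.eventually (eventually_gt_nhds hx.2)
      obtain ⟨n, hn⟩ := this.exists
      exact Set.mem_iUnion.2 ⟨n, hx.1, hn⟩
  have htend1 : Tendsto (fun n => ∫ θ in Set.Ioo 0 (b n), (1 - t^2 * Real.sin θ^2)⁻¹)
      atTop (𝓝 (∫ θ in Set.Ioo 0 (π/2), (1 - t^2 * Real.sin θ^2)⁻¹)) := by
    have := tendsto_setIntegral_of_monotone (f := fun θ : ℝ => (1 - t^2 * Real.sin θ^2)⁻¹)
      (μ := volume) (fun n => measurableSet_Ioo)
      (fun m n hmn => Set.Ioo_subset_Ioo le_rfl (hbmono hmn)) (hUnion ▸ hInt)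
    rwa [hUnion] at this
  have heq : ∀ n, ∫ θ in Set.Ioo 0 (b n), (1 - t^2 * Real.sin θ^2)⁻¹
      = c⁻¹ * Real.arctan (c * Real.tan (b n)) := by
    intro n
    rw [← MeasureTheory.integral_Ioc_eq_integral_Ioo,
      ← intervalIntegral.integral_of_le (hb0 n)]
    exact lemC_fin ht ht1 (hb0 n) (hblt n)
  have hbtendlt : Tendsto b atTop (𝓝[<] (π/2)) :=
    tendsto_nhdsWithin_of_tendsto_nhds_of_eventually_within b hbtend
      (Eventually.of_forall fun n => hblt n)
  have htanT : Tendsto (fun n => Real.tan (b n)) atTop atTop :=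
    Real.tendsto_tan_pi_div_two.comp hbtendlt
  have harctanT : Tendsto (fun n => c⁻¹ * Real.arctan (c * Real.tan (b n))) atTop
      (𝓝 (c⁻¹ * (π/2))) := by
    apply Tendsto.const_mul
    exact (Real.tendsto_arctan_atTop.mono_right nhdsWithin_le_nhds).comp
      (htanT.const_mul_atTop hcpos)
  have := tendsto_nhds_unique (htend1.congr (fun n => (heq n))) harctanT
  rw [this]; ring

lemma lemD_fin {b : ℝ} (hb0 : 0 ≤ b) (hb : b < 1) :
    ∫ t in (0:ℝ)..b, (Real.sqrt (1-t^2))⁻¹ = Real.arcsin b := by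
  have hderiv : ∀ x ∈ Set.uIcc (0:ℝ) b,
      HasDerivAt Real.arcsin ((Real.sqrt (1-x^2))⁻¹) x := by
    intro x hx
    rw [Set.uIcc_of_le hb0] at hx
    have h1 : x ≠ -1 := by intro h; rw [h] at hx; linarith [hx.1]
    have h2 : x ≠ 1 := by intro h; rw [h] at hx; linarith [hx.2]
    simpa [one_div] using Real.hasDerivAt_arcsin h1 h2
  have hcont : ContinuousOn (fun t : ℝ => (Real.sqrt (1-t^2))⁻¹) (Set.uIcc 0 b) := by
    rw [Set.uIcc_of_le hb0]
    apply ContinuousOn.inv₀ (Continuous.continuousOn (by continuity))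
    intro x hx
    have : 0 < 1 - x^2 := by nlinarith [hx.1, hx.2]
    exact ne_of_gt (Real.sqrt_pos.2 this)
  rw [intervalIntegral.integral_eq_sub_of_hasDerivAt hderiv hcont.intervalIntegrable]
  simp

lemma lemD_intble : IntegrableOn (fun t : ℝ => (Real.sqrt (1-t^2))⁻¹) (Set.Ioo 0 1) := by
  have hg : IntegrableOn (fun t : ℝ => ((1-t) ^ (-(1/2):ℝ))) (Set.Ioo 0 1) := by
    have h1 : IntervalIntegrable (fun x : ℝ => x ^ (-(1/2):ℝ)) volume 0 1 :=
      intervalIntegral.intervalIntegrable_rpow' (by norm_num)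
    have h2 : IntervalIntegrable (fun x : ℝ => (1-x) ^ (-(1/2):ℝ)) volume 0 1 := by
      have := h1.comp_sub_left 1
      simpa using this.symm
    rw [intervalIntegrable_iff_integrableOn_Ioo_of_le zero_le_one] at h2
    exact h2
  apply Integrable.mono' hg
  · apply Measurable.aestronglyMeasurable
    apply Measurable.inv
    exact (Real.continuous_sqrt.comp (by continuity)).measurable
  · filter_upwards [ae_restrict_mem measurableSet_Ioo] with t ht
    have h0 : 0 < 1 - t := by linarith [ht.2]
    have h1 : 0 < 1 - t^2 := by nlinarith [ht.1, ht.2]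
    rw [Real.norm_eq_abs, abs_of_nonneg (by positivity)]
    rw [Real.rpow_neg h0.le, ← Real.sqrt_eq_rpow]
    exact inv_anti₀ (Real.sqrt_pos.2 h0) (Real.sqrt_le_sqrt (by nlinarith [mul_pos ht.1 h0]))

lemma lemD : ∫ t in Set.Ioo (0:ℝ) 1, (Real.sqrt (1-t^2))⁻¹ = π/2 := by
  set b : ℕ → ℝ := fun n => 1 - 1/(n+1) with hbdef
  have hblt : ∀ n, b n < 1 := fun n => by
    have : 0 < (1:ℝ)/(n+1) := by positivity
    simp only [hbdef]; linarith
  have hb0 : ∀ n, 0 ≤ b n := fun n => by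
    have h1 : (1:ℝ)/(n+1) ≤ 1/1 := by
      apply div_le_div_of_nonneg_left zero_le_one one_pos
      exact_mod_cast Nat.le_add_left 1 n
    simp only [hbdef]; rw [div_one] at h1; linarith
  have hbmono : Monotone b := by
    intro m n hmn
    have : (1:ℝ)/(n+1) ≤ 1/(m+1) := by
      apply div_le_div_of_nonneg_left zero_le_one (by positivity)
      exact_mod_cast Nat.add_le_add_right hmn 1
    simp only [hbdef]; linarith
  have hbtend : Tendsto b atTop (𝓝 1) := by
    have h2 : Tendsto (fun n : ℕ => (1:ℝ)/(n+1)) atTop (𝓝 0) :=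
      tendsto_one_div_add_atTop_nhds_zero_nat
    have h3 : Tendsto (fun n : ℕ => 1 - (1:ℝ)/(n+1)) atTop (𝓝 (1 - 0)) :=
      tendsto_const_nhds.sub h2
    simpa [hbdef] using h3
  have hUnion : (⋃ n, Set.Ioo (0:ℝ) (b n)) = Set.Ioo 0 1 := by
    apply Set.Subset.antisymm
    · exact Set.iUnion_subset fun n => Set.Ioo_subset_Ioo le_rfl (hblt n).le
    · intro x hx
      obtain ⟨n, hn⟩ := (hbtend.eventually (eventually_gt_nhds hx.2)).exists
      exact Set.mem_iUnion.2 ⟨n, hx.1, hn⟩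
  have htend1 : Tendsto (fun n => ∫ t in Set.Ioo 0 (b n), (Real.sqrt (1-t^2))⁻¹)
      atTop (𝓝 (∫ t in Set.Ioo (0:ℝ) 1, (Real.sqrt (1-t^2))⁻¹)) := by
    have := tendsto_setIntegral_of_monotone (f := fun t : ℝ => (Real.sqrt (1-t^2))⁻¹)
      (μ := volume) (fun n => measurableSet_Ioo)
      (fun m n hmn => Set.Ioo_subset_Ioo le_rfl (hbmono hmn)) (hUnion ▸ lemD_intble)
    rwa [hUnion] at this
  have heq : ∀ n, ∫ t in Set.Ioo 0 (b n), (Real.sqrt (1-t^2))⁻¹ = Real.arcsin (b n) := by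
    intro n
    rw [← MeasureTheory.integral_Ioc_eq_integral_Ioo,
      ← intervalIntegral.integral_of_le (hb0 n)]
    exact lemD_fin (hb0 n) (hblt n)
  have harc : Tendsto (fun n => Real.arcsin (b n)) atTop (𝓝 (π/2)) := by
    have := (Real.continuous_arcsin.continuousAt (x := 1)).tendsto.comp hbtend
    simpa [Real.arcsin_one, Function.comp_def] using this
  exact tendsto_nhds_unique (htend1.congr fun n => (heq n).symm ▸ rfl) harc

lemma measf : Measurable (Function.uncurry fun x θ : ℝ =>
    ENNReal.ofReal ((Real.sqrt (1 - 4*x*(1-x)*Real.sin θ^2))⁻¹)) := by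
  apply ENNReal.measurable_ofReal.comp
  apply Measurable.inv
  have h : Continuous fun p : ℝ×ℝ => 1 - 4*p.1*(1-p.1)*Real.sin p.2^2 := by fun_prop
  exact (Real.continuous_sqrt.comp h).measurable

lemma measg : Measurable (Function.uncurry fun θ t : ℝ =>
    ENNReal.ofReal ((1 - t^2*Real.sin θ^2)⁻¹)) := by
  apply ENNReal.measurable_ofReal.comp
  apply Measurable.inv
  have h : Continuous fun p : ℝ×ℝ => 1 - p.2^2*Real.sin p.1^2 := by fun_prop
  exact h.measurable

lemma sin_bounds {θ : ℝ} (hθ : θ ∈ Set.Ioo 0 (π/2)) : 0 < Real.sin θ ∧ Real.sin θ < 1 := by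
  constructor
  · exact Real.sin_pos_of_pos_of_lt_pi hθ.1 (by linarith [hθ.2, Real.pi_pos])
  · have := Real.strictMonoOn_sin
      (Set.mem_Icc.2 ⟨by linarith [hθ.1, Real.pi_pos], by linarith [hθ.2]⟩)
      (Set.mem_Icc.2 ⟨by linarith [Real.pi_pos], le_rfl⟩) hθ.2
    simpa using this

lemma contC {t : ℝ} (ht2 : t^2 < 1) : Continuous fun θ : ℝ => (1 - t^2 * Real.sin θ^2)⁻¹ := by
  apply Continuous.inv₀ (by continuity)
  intro θ
  nlinarith [Real.sin_sq_le_one θ]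

theorem stmt0 :
    ∫ x in (0:ℝ)..1, K (2 * Real.sqrt (x * (1 - x))) = Real.pi ^ 2 / 4 := by
  have hD1 : MeasurableSet (Set.Ioo (0:ℝ) 1) := measurableSet_Ioo
  have hD2 : MeasurableSet (Set.Ioo (0:ℝ) (π/2)) := measurableSet_Ioo
  rw [intervalIntegral.integral_of_le zero_le_one, MeasureTheory.integral_Ioc_eq_integral_Ioo]
  -- rewrite integrand on Ioo 0 1
  have e2 : Set.EqOn (fun x => K (2 * Real.sqrt (x * (1-x))))
      (fun x => (∫⁻ θ in Set.Ioo 0 (π/2),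
        ENNReal.ofReal ((Real.sqrt (1 - 4*x*(1-x)*Real.sin θ^2))⁻¹)).toReal)
      (Set.Ioo (0:ℝ) 1) := by
    intro x hx
    have hk2 : (2 * Real.sqrt (x * (1-x)))^2 = 4*x*(1-x) := by
      rw [mul_pow, Real.sq_sqrt (by nlinarith [hx.1, hx.2] : (0:ℝ) ≤ x*(1-x))]; ring
    have hmeas : Measurable fun θ : ℝ => (Real.sqrt (1 - 4*x*(1-x)*Real.sin θ^2))⁻¹ := by
      apply Measurable.inv
      exact (Real.continuous_sqrt.comp (by continuity)).measurable
    have hrw : ∀ θ : ℝ, 1 / Real.sqrt (1 - (2*Real.sqrt (x*(1-x)))^2 * Real.sin θ^2)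
        = (Real.sqrt (1 - 4*x*(1-x)*Real.sin θ^2))⁻¹ := by
      intro θ; rw [hk2, one_div]
    show K (2 * Real.sqrt (x * (1-x))) = _
    unfold K
    simp_rw [hrw]
    exact integral_eq_lintegral_of_nonneg_ae
      (Eventually.of_forall fun θ => by positivity) hmeas.aestronglyMeasurable
  rw [setIntegral_congr_fun hD1 e2]
  -- toReal out
  have meas1 : AEMeasurable (fun x => ∫⁻ θ in Set.Ioo 0 (π/2),
      ENNReal.ofReal ((Real.sqrt (1 - 4*x*(1-x)*Real.sin θ^2))⁻¹)) (volume.restrict (Set.Ioo 0 1)) :=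
    (Measurable.lintegral_prod_right measf).aemeasurable
  have fin : ∀ᵐ x ∂(volume.restrict (Set.Ioo (0:ℝ) 1)), (∫⁻ θ in Set.Ioo 0 (π/2),
      ENNReal.ofReal ((Real.sqrt (1 - 4*x*(1-x)*Real.sin θ^2))⁻¹)) < ⊤ := by
    have hne : ∀ᵐ x ∂(volume.restrict (Set.Ioo (0:ℝ) 1)), x ≠ 1/2 := by
      apply ae_restrict_of_ae
      rw [ae_iff]
      have : {x : ℝ | ¬ x ≠ 1/2} = {1/2} := by ext y; simp
      rw [this]
      exact Real.volume_singleton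
    filter_upwards [hne, ae_restrict_mem hD1] with x hx12 hx
    have hpos : 0 < 1 - 4*x*(1-x) := by
      rcases lt_or_gt_of_ne hx12 with h | h <;> nlinarith
    have hb : ∀ θ : ℝ, ENNReal.ofReal ((Real.sqrt (1 - 4*x*(1-x)*Real.sin θ^2))⁻¹)
        ≤ ENNReal.ofReal ((Real.sqrt (1 - 4*x*(1-x)))⁻¹) := by
      intro θ
      apply ENNReal.ofReal_le_ofReal
      apply inv_anti₀ (Real.sqrt_pos.2 hpos)
      apply Real.sqrt_le_sqrt
      have h4 : 0 ≤ 4*x*(1-x) := by nlinarith [hx.1, hx.2]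
      have h5 := mul_le_of_le_one_right h4 (Real.sin_sq_le_one θ)
      linarith
    calc ∫⁻ θ in Set.Ioo 0 (π/2), ENNReal.ofReal ((Real.sqrt (1 - 4*x*(1-x)*Real.sin θ^2))⁻¹)
        ≤ ∫⁻ _ in Set.Ioo 0 (π/2), ENNReal.ofReal ((Real.sqrt (1 - 4*x*(1-x)))⁻¹) :=
          lintegral_mono hb
      _ = ENNReal.ofReal ((Real.sqrt (1 - 4*x*(1-x)))⁻¹) * volume (Set.Ioo 0 (π/2)) :=
          setLIntegral_const _ _
      _ < ⊤ := ENNReal.mul_lt_top ENNReal.ofReal_lt_top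
          (by rw [Real.volume_Ioo]; exact ENNReal.ofReal_lt_top)
  rw [integral_toReal meas1 fin]
  -- swap
  rw [lintegral_lintegral_swap measf.aemeasurable]
  -- inner over x equals inner over t with g
  have e5 : ∀ᵐ θ ∂(volume : Measure ℝ), θ ∈ Set.Ioo (0:ℝ) (π/2) →
      (∫⁻ x in Set.Ioo (0:ℝ) 1, ENNReal.ofReal ((Real.sqrt (1 - 4*x*(1-x)*Real.sin θ^2))⁻¹))
        = ∫⁻ t in Set.Ioo (0:ℝ) 1, ENNReal.ofReal ((1 - t^2*Real.sin θ^2)⁻¹) := by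
    apply ae_of_all
    intro θ hθ
    obtain ⟨hs, hs1⟩ := sin_bounds hθ
    have hs2 : Real.sin θ^2 < 1 := by nlinarith
    have h1 : (∫⁻ x in Set.Ioo (0:ℝ) 1, ENNReal.ofReal ((Real.sqrt (1 - 4*x*(1-x)*Real.sin θ^2))⁻¹))
        = ENNReal.ofReal (∫ x in Set.Ioo (0:ℝ) 1, (Real.sqrt (1 - 4*x*(1-x)*Real.sin θ^2))⁻¹) := by
      refine (ofReal_integral_eq_lintegral_ofReal ?_ ?_).symm
      · exact ((cont_integrand1 hs2).integrableOn_Icc).mono_set Set.Ioo_subset_Icc_self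
      · exact Eventually.of_forall fun x => by positivity
    have h2 : (∫⁻ t in Set.Ioo (0:ℝ) 1, ENNReal.ofReal ((1 - t^2*Real.sin θ^2)⁻¹))
        = ENNReal.ofReal (∫ t in Set.Ioo (0:ℝ) 1, (1 - t^2*Real.sin θ^2)⁻¹) := by
      refine (ofReal_integral_eq_lintegral_ofReal ?_ ?_).symm
      · refine (ContinuousOn.integrableOn_compact isCompact_Icc ?_).mono_set
          Set.Ioo_subset_Icc_self
        apply ContinuousOn.inv₀ (by fun_prop)
        rintro t ⟨ht0, ht1⟩
        have htt : t^2 ≤ 1 := by nlinarith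
        have h5 : t^2*Real.sin θ^2 ≤ Real.sin θ^2 :=
          mul_le_of_le_one_left (sq_nonneg (Real.sin θ)) htt
        intro hcontra
        nlinarith
      · filter_upwards [ae_restrict_mem hD1] with t ht
        have : 0 < 1 - t^2*Real.sin θ^2 := by nlinarith [ht.1, ht.2]
        positivity
    rw [h1, h2]
    congr 1
    rw [← MeasureTheory.integral_Ioc_eq_integral_Ioo, ← intervalIntegral.integral_of_le zero_le_one,
      ← MeasureTheory.integral_Ioc_eq_integral_Ioo, ← intervalIntegral.integral_of_le zero_le_one,
      lemA hs hs1, lemB hs hs1]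
  rw [setLIntegral_congr_fun_ae hD2 e5]
  -- swap back
  rw [lintegral_lintegral_swap measg.aemeasurable]
  -- inner over θ
  have e8 : ∀ᵐ t ∂(volume : Measure ℝ), t ∈ Set.Ioo (0:ℝ) 1 →
      (∫⁻ θ in Set.Ioo 0 (π/2), ENNReal.ofReal ((1 - t^2*Real.sin θ^2)⁻¹))
        = ENNReal.ofReal ((π/2) * (Real.sqrt (1-t^2))⁻¹) := by
    apply ae_of_all
    intro t ht
    have ht2 : t^2 < 1 := by nlinarith [ht.1, ht.2]
    have h1 : (∫⁻ θ in Set.Ioo 0 (π/2), ENNReal.ofReal ((1 - t^2*Real.sin θ^2)⁻¹))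
        = ENNReal.ofReal (∫ θ in Set.Ioo 0 (π/2), (1 - t^2*Real.sin θ^2)⁻¹) := by
      refine (ofReal_integral_eq_lintegral_ofReal ?_ ?_).symm
      · exact ((contC ht2).integrableOn_Icc).mono_set Set.Ioo_subset_Icc_self
      · refine Eventually.of_forall fun θ => ?_
        have : 0 < 1 - t^2*Real.sin θ^2 := by nlinarith [Real.sin_sq_le_one θ]
        positivity
    rw [h1, lemC ht.1 ht.2]
  rw [setLIntegral_congr_fun_ae hD1 e8]
  -- pull out ofReal
  have hIntB : IntegrableOn (fun t : ℝ => (π/2) * (Real.sqrt (1-t^2))⁻¹) (Set.Ioo 0 1) :=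
    lemD_intble.const_mul _
  have h9 : (∫⁻ t in Set.Ioo (0:ℝ) 1, ENNReal.ofReal ((π/2) * (Real.sqrt (1-t^2))⁻¹))
      = ENNReal.ofReal (∫ t in Set.Ioo (0:ℝ) 1, (π/2) * (Real.sqrt (1-t^2))⁻¹) := by
    refine (ofReal_integral_eq_lintegral_ofReal hIntB ?_).symm
    exact Eventually.of_forall fun t => by positivity
  rw [h9, MeasureTheory.integral_const_mul, lemD, ENNReal.toReal_ofReal (by positivity)]
  ring
end

section
/- The series 1 + Σ_{n≥1} ((1/2)_n² / (1)_n²) · 4^n (n!)² / (2n+1)! converges and equals π/2, where (x)_n denotes the Pochhammer symbol. -/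
open MeasureTheory Real Filter

lemma poch_one (n : ℕ) : poch 1 n = n.factorial := by
  induction n with
  | zero => simp [poch]
  | succ k ih =>
    rw [poch, Finset.prod_range_succ, ← poch, ih, Nat.factorial_succ]
    push_cast; ring

lemma poch_half (n : ℕ) : poch (1/2) n * (4^n * n.factorial) = (2*n).factorial := by
  induction n with
  | zero => simp [poch]
  | succ k ih =>
    rw [poch, Finset.prod_range_succ, ← poch]
    have h : (2*(k+1)).factorial = (2*k+2) * ((2*k+1) * (2*k).factorial) := by
      have : 2*(k+1) = (2*k+1)+1 := by ring
      rw [this, Nat.factorial_succ, Nat.factorial_succ]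
    push_cast [h, Nat.factorial_succ]
    push_cast at ih
    linear_combination (2 * (k:ℝ) + 2) * (2 * k + 1) * ih

lemma W2_eq (n : ℕ) : (∫ θ in (0:ℝ)..(π/2), sin θ ^ (2*n)) * (4^n * (n.factorial:ℝ)^2)
    = π/2 * (2*n).factorial := by
  induction n with
  | zero => simp
  | succ k ih =>
    have hred := integral_sin_pow (a := 0) (b := π/2) (2*k)
    have h2 : 2*(k+1) = 2*k+2 := by ring
    rw [h2, hred]
    have h : (2*(k+1)).factorial = (2*k+2) * ((2*k+1) * (2*k).factorial) := by
      have : 2*(k+1) = (2*k+1)+1 := by ring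
      rw [this, Nat.factorial_succ, Nat.factorial_succ]
    push_cast [h, Nat.factorial_succ]
    push_cast at ih
    simp only [Real.sin_zero, Real.cos_pi_div_two, Real.sin_pi_div_two, Real.cos_zero]
    have hk : (2*(k:ℝ)+2) ≠ 0 := by positivity
    field_simp
    linear_combination (4*((k:ℝ)+1)*(2*(k:ℝ)+1)) * ih

lemma In_eq (n : ℕ) : (∫ φ in (0:ℝ)..(π/2), sin φ ^ (2*n) * cos φ) = 1/(2*n+1) := by
  have := integral_sin_pow_mul_cos_pow_odd (a := 0) (b := π/2) (2*n) 0
  simp only [pow_one, pow_zero, mul_one, Real.sin_zero, Real.sin_pi_div_two] at this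
  rw [show (∫ φ in (0:ℝ)..(π/2), sin φ ^ (2*n) * cos φ)
      = ∫ x in (0:ℝ)..(π/2), sin x ^ (2*n) * cos x ^ (2*0+1) by norm_num, this]
  simp [integral_pow]

lemma intJ {k : ℝ} (hk0 : 0 ≤ k) (hk : k < 1) :
    ∫ θ in (0:ℝ)..(π/2), (1 - k^2 * sin θ^2)⁻¹ = π / (2 * Real.sqrt (1-k^2)) := by
  have hk2 : k^2 < 1 := by nlinarith
  set a : ℝ := Real.sqrt (1-k^2) with ha_def
  have ha : 0 < a := Real.sqrt_pos.mpr (by linarith)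
  have ha2 : a^2 = 1 - k^2 := Real.sq_sqrt (by linarith)
  -- integrand continuous
  have hden : ∀ x : ℝ, (0:ℝ) < 1 - k^2 * sin x^2 := by
    intro x
    nlinarith [sin_sq_le_one x, sq_nonneg (sin x), sq_nonneg k]
  have hf : Continuous fun x : ℝ => (1 - k^2 * sin x^2)⁻¹ := by
    apply Continuous.inv₀ (by fun_prop)
    intro x; exact ne_of_gt (hden x)
  set F : ℝ → ℝ := fun x => arctan (a * tan x) / a with hF_def
  have hderiv : ∀ x ∈ Set.Ico (0:ℝ) (π/2), HasDerivAt F ((1 - k^2 * sin x^2)⁻¹) x := by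
    intro x hx
    have hcos : Real.cos x ≠ 0 := by
      have : 0 < Real.cos x := Real.cos_pos_of_mem_Ioo ⟨by linarith [hx.1, pi_pos], hx.2⟩
      exact ne_of_gt this
    have h1 : HasDerivAt (fun y => a * tan y) (a * (1 / cos x ^ 2)) x :=
      (Real.hasDerivAt_tan hcos).const_mul a
    have h2 : HasDerivAt arctan (1 / (1 + (a * tan x)^2)) (a * tan x) :=
      Real.hasDerivAt_arctan _
    have h3 := (h2.comp x h1).div_const a
    refine h3.congr_deriv ?_
    symm
    rw [Real.tan_eq_sin_div_cos]
    have h4 : 1 - k^2 * sin x^2 = cos x^2 + a^2 * sin x^2 := by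
      rw [ha2]; nlinarith [Real.sin_sq_add_cos_sq x]
    rw [h4]
    field_simp
  set G : ℝ → ℝ := fun b => ∫ x in (0:ℝ)..b, (1 - k^2 * sin x^2)⁻¹ with hG_def
  have hGcont : Continuous G :=
    intervalIntegral.continuous_primitive (fun c d => hf.intervalIntegrable c d) 0
  have hGF : ∀ b ∈ Set.Ico (0:ℝ) (π/2), G b = F b := by
    intro b hb
    have hsub : Set.uIcc (0:ℝ) b ⊆ Set.Ico 0 (π/2) := by
      rw [Set.uIcc_of_le hb.1]
      exact fun y hy => ⟨hy.1, lt_of_le_of_lt hy.2 hb.2⟩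
    have := intervalIntegral.integral_eq_sub_of_hasDerivAt
      (fun x hx => hderiv x (hsub hx))
      (hf.intervalIntegrable 0 b)
    rw [hG_def]
    simp only [this, hF_def]
    simp [Real.arctan_zero]
  -- limit of F at π/2 from the left
  have hlim : Tendsto F (nhdsWithin (π/2) (Set.Iio (π/2))) (nhds (π / (2*a))) := by
    have h1 : Tendsto (fun x => a * tan x) (nhdsWithin (π/2) (Set.Iio (π/2))) atTop :=
      (Real.tendsto_tan_pi_div_two).const_mul_atTop ha
    have h2 : Tendsto (fun x => arctan (a * tan x)) (nhdsWithin (π/2) (Set.Iio (π/2)))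
        (nhds (π/2)) := Real.tendsto_arctan_atTop.mono_right nhdsWithin_le_nhds |>.comp h1
    have h3 := h2.div_const a
    convert h3 using 2
    ring
  -- limit of G at π/2 from the left equals G (π/2)
  have hlimG : Tendsto G (nhdsWithin (π/2) (Set.Iio (π/2))) (nhds (G (π/2))) :=
    (hGcont.continuousAt.tendsto).mono_left nhdsWithin_le_nhds
  have heq : G =ᶠ[nhdsWithin (π/2) (Set.Iio (π/2))] F := by
    filter_upwards [Ioo_mem_nhdsLT_of_mem (Set.mem_Ioc.mpr ⟨by positivity, le_refl _⟩)]
      with b hb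
    exact hGF b ⟨le_of_lt hb.1, hb.2⟩
  have : Tendsto G (nhdsWithin (π/2) (Set.Iio (π/2))) (nhds (π / (2*a))) :=
    hlim.congr' heq.symm
  exact tendsto_nhds_unique hlimG this

lemma lint_eq (f : ℝ → ℝ) (hf : Continuous f)
    (h0 : ∀ x ∈ Set.Ioo (0:ℝ) (π/2), 0 ≤ f x) :
    ∫⁻ x in Set.Ioo 0 (π/2), ENNReal.ofReal (f x)
      = ENNReal.ofReal (∫ x in (0:ℝ)..(π/2), f x) := by
  rw [intervalIntegral.integral_of_le (by positivity), integral_Ioc_eq_integral_Ioo,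
    ofReal_integral_eq_lintegral_ofReal]
  · exact (hf.integrableOn_Icc.mono_set Set.Ioo_subset_Icc_self)
  · exact (ae_restrict_iff' measurableSet_Ioo).mpr (Filter.Eventually.of_forall h0)

lemma inner_int {φ : ℝ} (hφ : φ ∈ Set.Ioo (0:ℝ) (π/2)) :
    ∫ θ in (0:ℝ)..(π/2), cos φ * (1 - sin φ^2 * sin θ^2)⁻¹ = π/2 := by
  have hcos : 0 < cos φ := Real.cos_pos_of_mem_Ioo ⟨by linarith [hφ.1, pi_pos], hφ.2⟩
  have hsin0 : 0 ≤ sin φ := Real.sin_nonneg_of_nonneg_of_le_pi (le_of_lt hφ.1)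
    (by linarith [hφ.2, pi_pos])
  have hsin1 : sin φ < 1 := by
    nlinarith [Real.sin_sq_add_cos_sq φ, Real.sin_le_one φ]
  rw [intervalIntegral.integral_const_mul, intJ hsin0 hsin1]
  have h1 : Real.sqrt (1 - sin φ^2) = cos φ := by
    rw [show (1:ℝ) - sin φ^2 = cos φ^2 by nlinarith [Real.sin_sq_add_cos_sq φ]]
    exact Real.sqrt_sq (le_of_lt hcos)
  rw [h1]
  field_simp

theorem stmt2 :
    HasSum (fun n : ℕ => poch (1/2) n ^ 2 / poch 1 n ^ 2 *
      (4 ^ n * (Nat.factorial n : ℝ) ^ 2 / (Nat.factorial (2 * n + 1) : ℝ)))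
      (Real.pi / 2) := by
  set a : ℕ → ℝ := fun n => poch (1/2) n ^ 2 / poch 1 n ^ 2 *
      (4 ^ n * (Nat.factorial n : ℝ) ^ 2 / (Nat.factorial (2 * n + 1) : ℝ)) with ha_def
  set W : ℕ → ℝ := fun n => ∫ θ in (0:ℝ)..(π/2), sin θ ^ (2*n) with hW_def
  have hp : ∀ n : ℕ, ((n.factorial : ℝ)) ≠ 0 := fun n => Nat.cast_ne_zero.mpr n.factorial_ne_zero
  have h4 : ∀ n : ℕ, ((4:ℝ)^n) ≠ 0 := fun n => by positivity
  have hX : ∀ n : ℕ, poch (1/2) n = ((2*n).factorial : ℝ) / (4^n * n.factorial) := by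
    intro n
    rw [eq_div_iff (by exact mul_ne_zero (h4 n) (hp n))]
    exact poch_half n
  have hWv : ∀ n : ℕ, W n = π/2 * ((2*n).factorial : ℝ) / (4^n * (n.factorial:ℝ)^2) := by
    intro n
    rw [eq_div_iff (by exact mul_ne_zero (h4 n) (pow_ne_zero 2 (hp n)))]
    exact W2_eq n
  have hr : ∀ n : ℕ, ((2*n+1).factorial : ℝ) = (2*(n:ℝ)+1) * ((2*n).factorial : ℝ) := by
    intro n
    rw [Nat.factorial_succ]; push_cast; ring
  -- the key per-term identity
  have term_eq : ∀ n : ℕ, π/2 * a n = W n * (1/(2*(n:ℝ)+1)) := by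
    intro n
    rw [ha_def, hWv n]
    simp only []
    rw [poch_one, hX, hr]
    have h1 : (2*(n:ℝ)+1) ≠ 0 := by positivity
    have h2 : (((2*n).factorial : ℝ)) ≠ 0 := hp _
    field_simp
  have ha_nonneg : ∀ n : ℕ, 0 ≤ a n := by
    intro n
    rw [ha_def]
    have := Nat.cast_pos (α := ℝ) |>.mpr (Nat.factorial_pos (2*n+1))
    positivity
  have hW_nonneg : ∀ n : ℕ, 0 ≤ W n := by
    intro n
    rw [hWv n]
    positivity
  set T := Set.Ioo (0:ℝ) (π/2) with hT_def
  set f : ℕ → ℝ := fun n => π/2 * a n with hf_def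
  have hcos_nn : ∀ x ∈ T, (0:ℝ) ≤ cos x := fun x hx =>
    Real.cos_nonneg_of_mem_Icc ⟨by linarith [hx.1, pi_pos], le_of_lt hx.2⟩
  have key : ∑' n, ENNReal.ofReal (f n) = ENNReal.ofReal (π/2) * ENNReal.ofReal (π/2) := by
    have step1 : ∀ n : ℕ, ENNReal.ofReal (f n)
        = ∫⁻ φ in T, ENNReal.ofReal (W n * ((sin φ^2)^n * cos φ)) := by
      intro n
      rw [lint_eq _ (by fun_prop)
        (fun x hx => by
          have := hcos_nn x hx
          have := hW_nonneg n
          positivity)]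
      congr 1
      rw [intervalIntegral.integral_const_mul]
      rw [show (fun φ => (sin φ^2)^n * cos φ) = fun φ => sin φ^(2*n) * cos φ from
        funext fun φ => by rw [← pow_mul]]
      rw [In_eq]
      exact term_eq n
    -- swap sum and outer integral
    rw [tsum_congr step1,
      ← MeasureTheory.lintegral_tsum (fun n =>
        ((by fun_prop : Measurable fun φ : ℝ =>
          W n * ((sin φ^2)^n * cos φ)).ennreal_ofReal).aemeasurable)]
    -- compute pointwise in φ
    have step3 : ∀ φ ∈ T, ∑' n, ENNReal.ofReal (W n * ((sin φ^2)^n * cos φ))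
        = ENNReal.ofReal (π/2) := by
      intro φ hφ
      have hsφ0 : 0 ≤ sin φ ^ 2 := sq_nonneg _
      have hsφ1 : sin φ ^ 2 < 1 := by
        have hcos : 0 < cos φ := Real.cos_pos_of_mem_Ioo ⟨by linarith [hφ.1, pi_pos], hφ.2⟩
        nlinarith [Real.sin_sq_add_cos_sq φ]
      have hc : 0 ≤ cos φ := hcos_nn φ hφ
      -- write each W n as an inner lintegral
      have inner1 : ∀ n : ℕ, ENNReal.ofReal (W n * ((sin φ^2)^n * cos φ))
          = ∫⁻ θ in T, ENNReal.ofReal ((sin θ^2)^n * ((sin φ^2)^n * cos φ)) := by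
        intro n
        rw [lint_eq _ (by fun_prop) (fun x hx => by positivity)]
        congr 1
        rw [show (fun θ => (sin θ^2)^n * ((sin φ^2)^n * cos φ)) = fun θ =>
            sin θ^(2*n) * ((sin φ^2)^n * cos φ) from funext fun θ => by rw [← pow_mul]]
        rw [intervalIntegral.integral_mul_const]
      rw [tsum_congr inner1,
        ← MeasureTheory.lintegral_tsum (fun n =>
          ((by fun_prop : Measurable fun θ : ℝ =>
            (sin θ^2)^n * ((sin φ^2)^n * cos φ)).ennreal_ofReal).aemeasurable)]
      -- geometric series pointwise in θ
      have ptwise : ∀ θ ∈ T, ∑' n, ENNReal.ofReal ((sin θ^2)^n * ((sin φ^2)^n * cos φ))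
          = ENNReal.ofReal (cos φ * (1 - sin φ^2 * sin θ^2)⁻¹) := by
        intro θ hθ
        have hr0 : 0 ≤ sin φ^2 * sin θ^2 := by positivity
        have hr1 : sin φ^2 * sin θ^2 < 1 := by
          nlinarith [sin_sq_le_one θ, sq_nonneg (sin φ), sq_nonneg (sin θ)]
        have hgeo : HasSum (fun n : ℕ => cos φ * (sin φ^2 * sin θ^2)^n)
            (cos φ * (1 - sin φ^2 * sin θ^2)⁻¹) :=
          (hasSum_geometric_of_lt_one hr0 hr1).mul_left (cos φ)
        have hterm : ∀ n : ℕ, (sin θ^2)^n * ((sin φ^2)^n * cos φ)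
            = cos φ * (sin φ^2 * sin θ^2)^n := by
          intro n; rw [mul_pow]; ring
        simp only [hterm]
        rw [← ENNReal.ofReal_tsum_of_nonneg (fun n => by positivity) hgeo.summable,
          hgeo.tsum_eq]
      rw [MeasureTheory.setLIntegral_congr_fun measurableSet_Ioo
        ptwise]
      rw [lint_eq _ ?_ (fun x hx => by
          have h2 : 0 < 1 - sin φ^2 * sin x^2 := by
            nlinarith [sin_sq_le_one x, sq_nonneg (sin x)]
          positivity)]
      · rw [inner_int hφ]
      · apply Continuous.mul continuous_const
        apply Continuous.inv₀ (by fun_prop)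
        intro x
        have : sin φ^2 * sin x^2 < 1 := by
          nlinarith [sin_sq_le_one x, sq_nonneg (sin x), sq_nonneg (sin φ)]
        intro hc0; nlinarith
    rw [MeasureTheory.setLIntegral_congr_fun measurableSet_Ioo
      step3]
    rw [MeasureTheory.setLIntegral_const, Real.volume_Ioo]
    norm_num
  -- conclude
  have hfin : ∑' n, ENNReal.ofReal (f n) ≠ ⊤ := by
    rw [key]; exact ENNReal.mul_ne_top ENNReal.ofReal_ne_top ENNReal.ofReal_ne_top
  have hf_nonneg : ∀ n, 0 ≤ f n := fun n => by
    have := ha_nonneg n; rw [hf_def]; positivity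
  have hsummable : Summable f := by
    have h := ENNReal.summable_toReal hfin
    exact h.congr fun n => ENNReal.toReal_ofReal (hf_nonneg n)
  have htsum : ∑' n, f n = π/2 * (π/2) := by
    have h1 : ENNReal.ofReal (∑' n, f n) = ENNReal.ofReal (π/2 * (π/2)) := by
      rw [ENNReal.ofReal_tsum_of_nonneg hf_nonneg hsummable, key,
        ENNReal.ofReal_mul (by positivity)]
    have h2 : (0:ℝ) ≤ ∑' n, f n := tsum_nonneg hf_nonneg
    rwa [ENNReal.ofReal_eq_ofReal_iff h2 (by positivity)] at h1
  have hS : HasSum f (π/2 * (π/2)) := htsum ▸ hsummable.hasSum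
  have := hS.mul_left (2/π)
  have hπ : (π:ℝ) ≠ 0 := ne_of_gt pi_pos
  have hcoeff : 2/π * (π/2 * (π/2)) = π/2 := by field_simp
  rw [hcoeff] at this
  refine this.congr_fun ?_
  intro n
  rw [hf_def]
  simp only []
  field_simp
end

section
/- The function f(a) = [K(√((1-√(1+a²))/2))]² satisfies the third-order ODE a²(1+a²) f'''(a) + 3a(1+2a²) f''(a) + (1+7a²) f'(a) + a f(a) = 0 for a ∈ (0,1). -/
open MeasureTheory Real Filter

/-! ### Auxiliary development -/

noncomputable def cc (n : ℕ) : ℝ := poch (1/2) n ^ 2 / poch 1 n ^ 2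

lemma poch_pos {x : ℝ} (hx : 0 < x) (n : ℕ) : 0 < poch x n :=
  Finset.prod_pos fun i _ => by positivity

lemma poch_succ (x : ℝ) (n : ℕ) : poch x (n+1) = poch x n * (x + n) :=
  Finset.prod_range_succ _ n

lemma cc_pos (n : ℕ) : 0 < cc n := by
  have h1 := poch_pos (by norm_num : (0:ℝ) < 1/2) n
  have h2 := poch_pos one_pos n
  exact div_pos (by positivity) (by positivity)

lemma cc_le_one (n : ℕ) : cc n ≤ 1 := by
  have h1 := poch_pos (by norm_num : (0:ℝ) < 1/2) n
  have h2 := poch_pos one_pos n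
  have hle : poch (1/2) n ≤ poch 1 n := by
    apply Finset.prod_le_prod (fun i _ => by positivity) (fun i _ => by norm_num)
  rw [cc, div_le_one (by positivity)]
  exact pow_le_pow_left₀ h1.le hle 2

lemma cc_rec (n : ℕ) : ((n:ℝ)+1)^2 * cc (n+1) = ((n:ℝ)+1/2)^2 * cc n := by
  have h1 : poch 1 n ≠ 0 := (poch_pos one_pos n).ne'
  have h2 : (1:ℝ) + (n:ℝ) ≠ 0 := by positivity
  rw [cc, cc, poch_succ, poch_succ]
  field_simp
  ring

noncomputable def G0 (m : ℝ) : ℝ := ∑' n : ℕ, cc n * m ^ n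
noncomputable def G1 (m : ℝ) : ℝ := ∑' n : ℕ, ((n:ℝ)+1) * cc (n+1) * m ^ n
noncomputable def G2 (m : ℝ) : ℝ := ∑' n : ℕ, ((n:ℝ)+1) * ((n:ℝ)+2) * cc (n+2) * m ^ n
noncomputable def G3 (m : ℝ) : ℝ :=
  ∑' n : ℕ, ((n:ℝ)+1) * ((n:ℝ)+2) * ((n:ℝ)+3) * cc (n+3) * m ^ n

lemma summable_u :
    Summable (fun n : ℕ => (((n:ℝ)+1) * ((n:ℝ)+2) * ((n:ℝ)+3)) * (3/4:ℝ)^n) := by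
  have hr : ‖(3/4:ℝ)‖ < 1 := by rw [Real.norm_eq_abs, abs_of_nonneg (by norm_num : (0:ℝ) ≤ 3/4)]; norm_num
  have h3 := summable_pow_mul_geometric_of_norm_lt_one (R := ℝ) 3 hr
  have h2 := summable_pow_mul_geometric_of_norm_lt_one (R := ℝ) 2 hr
  have h1 := summable_pow_mul_geometric_of_norm_lt_one (R := ℝ) 1 hr
  have h0 := summable_pow_mul_geometric_of_norm_lt_one (R := ℝ) 0 hr
  have := ((h3.add (h2.mul_left 6)).add ((h1.mul_left 11).add (h0.mul_left 6)))
  apply this.congr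
  intro n
  push_cast
  ring

lemma summable_bd {m : ℝ} (hm : |m| ≤ 3/4) {d : ℕ → ℝ}
    (hd : ∀ n, |d n| ≤ ((n:ℝ)+1) * ((n:ℝ)+2) * ((n:ℝ)+3)) :
    Summable (fun n => d n * m ^ n) := by
  apply Summable.of_norm_bounded summable_u
  intro n
  rw [Real.norm_eq_abs, abs_mul, abs_pow]
  have h1 : |m|^n ≤ (3/4:ℝ)^n := pow_le_pow_left₀ (abs_nonneg m) hm n
  have h2 : (0:ℝ) ≤ ((n:ℝ)+1) * ((n:ℝ)+2) * ((n:ℝ)+3) := by positivity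
  exact mul_le_mul (hd n) h1 (pow_nonneg (abs_nonneg m) n) h2

lemma tsum_shift {h : ℕ → ℝ} (hs : Summable h) (h0 : h 0 = 0) :
    ∑' n, h n = ∑' n, h (n+1) := by
  rw [Summable.tsum_eq_zero_add hs, h0, zero_add]

lemma hasDerivAt_psum {d : ℕ → ℝ} (hd : ∀ n, |d n| ≤ ((n:ℝ)+1) * ((n:ℝ)+2)) {y : ℝ}
    (hy : y ∈ Set.Ioo (-(3/4):ℝ) (3/4)) :
    HasDerivAt (fun z => ∑' n : ℕ, d n * z ^ n)
      (∑' n : ℕ, d (n+1) * (((n:ℝ)+1) * y ^ n)) y := by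
  have hd3 : ∀ n, |d n| ≤ ((n:ℝ)+1) * ((n:ℝ)+2) * ((n:ℝ)+3) := by
    intro n
    have hn : (0:ℝ) ≤ (n:ℝ) := Nat.cast_nonneg n
    nlinarith [hd n, abs_nonneg (d n)]
  have bnd : ∀ (n : ℕ) (z : ℝ), z ∈ Set.Ioo (-(3/4):ℝ) (3/4) →
      ‖d n * ((n:ℝ) * z ^ (n-1))‖ ≤
        ((((n:ℝ)+1) * ((n:ℝ)+2) * ((n:ℝ)+3)) * (3/4:ℝ)^n) * (4/3) := by
    intro n z hz
    have hz34 : |z| ≤ 3/4 := le_of_lt (abs_lt.2 ⟨hz.1, hz.2⟩)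
    rw [Real.norm_eq_abs, abs_mul, abs_mul, abs_pow]
    match n with
    | 0 => simp; positivity
    | (k+1) =>
      have h1 : |z|^(k+1-1) ≤ (3/4:ℝ)^k := by
        simpa using pow_le_pow_left₀ (abs_nonneg z) hz34 k
      have hk : (0:ℝ) ≤ (k:ℝ) := Nat.cast_nonneg k
      have h2 : |d (k+1)| ≤ ((k:ℝ)+2) * ((k:ℝ)+3) := by
        have := hd (k+1); push_cast at this ⊢; linarith
      have h3 : |((k+1 : ℕ):ℝ)| = (k:ℝ)+1 := by
        rw [abs_of_nonneg (by positivity)]; push_cast; ring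
      rw [h3]
      have hpk : (0:ℝ) < (3/4:ℝ)^k := by positivity
      calc |d (k+1)| * (((k:ℝ)+1) * |z|^(k+1-1))
          ≤ (((k:ℝ)+2) * ((k:ℝ)+3)) * (((k:ℝ)+1) * (3/4:ℝ)^k) := by
            apply mul_le_mul h2 (by nlinarith) (by positivity) (by positivity)
        _ ≤ (((k:ℝ)+2) * ((k:ℝ)+3)) * (((k:ℝ)+4) * (3/4:ℝ)^k) := by
            apply mul_le_mul_of_nonneg_left
              (mul_le_mul_of_nonneg_right (by linarith) hpk.le) (by positivity)
        _ = ((((k+1:ℕ):ℝ)+1) * (((k+1:ℕ):ℝ)+2) * (((k+1:ℕ):ℝ)+3)) * (3/4:ℝ)^(k+1) * (4/3) := by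
            push_cast; ring
  have key : HasDerivAt (fun z => ∑' n : ℕ, d n * z ^ n)
      (∑' n : ℕ, d n * ((n:ℝ) * y ^ (n-1))) y :=
    hasDerivAt_tsum_of_isPreconnected
      (summable_u.mul_right (4/3)) isOpen_Ioo (convex_Ioo _ _).isPreconnected
      (fun n z _ => (hasDerivAt_pow n z).const_mul (d n)) bnd
      (show (0:ℝ) ∈ Set.Ioo (-(3/4):ℝ) (3/4) by norm_num)
      (summable_bd (by norm_num) hd3) hy
  convert key using 1
  have hsum : Summable (fun n : ℕ => d n * ((n:ℝ) * y ^ (n-1))) :=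
    Summable.of_norm_bounded (summable_u.mul_right (4/3)) (fun n => bnd n y hy)
  rw [tsum_shift hsum (by simp)]
  apply tsum_congr
  intro n
  push_cast [Nat.add_sub_cancel]
  ring


lemma coeff_bd {Q P : ℝ} (hQ : 0 ≤ Q) (hQP : Q ≤ P) (k : ℕ) : |Q * cc k| ≤ P := by
  rw [abs_of_nonneg (mul_nonneg hQ (cc_pos k).le)]
  calc Q * cc k ≤ Q * 1 := mul_le_mul_of_nonneg_left (cc_le_one k) hQ
    _ ≤ P := by linarith

lemma bd_cc0 : ∀ n : ℕ, |cc n| ≤ ((n:ℝ)+1) * ((n:ℝ)+2) := by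
  intro n
  have hn : (0:ℝ) ≤ (n:ℝ) := Nat.cast_nonneg n
  rw [abs_of_pos (cc_pos n)]
  nlinarith [cc_le_one n, cc_pos n]

lemma bd_cc1 : ∀ n : ℕ, |((n:ℝ)+1) * cc (n+1)| ≤ ((n:ℝ)+1) * ((n:ℝ)+2) := by
  intro n
  have hn : (0:ℝ) ≤ (n:ℝ) := Nat.cast_nonneg n
  exact coeff_bd (by positivity) (by nlinarith) (n+1)

lemma bd_cc2 : ∀ n : ℕ, |((n:ℝ)+1) * ((n:ℝ)+2) * cc (n+2)| ≤ ((n:ℝ)+1) * ((n:ℝ)+2) := by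
  intro n
  have hn : (0:ℝ) ≤ (n:ℝ) := Nat.cast_nonneg n
  exact coeff_bd (by positivity) (by nlinarith) (n+2)

lemma bd23 {d : ℕ → ℝ} (hd : ∀ n, |d n| ≤ ((n:ℝ)+1) * ((n:ℝ)+2)) :
    ∀ n : ℕ, |d n| ≤ ((n:ℝ)+1) * ((n:ℝ)+2) * ((n:ℝ)+3) := by
  intro n
  have hn : (0:ℝ) ≤ (n:ℝ) := Nat.cast_nonneg n
  nlinarith [hd n, abs_nonneg (d n)]

lemma hG0 {y : ℝ} (hy : y ∈ Set.Ioo (-(3/4):ℝ) (3/4)) : HasDerivAt G0 (G1 y) y := by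
  have h := hasDerivAt_psum bd_cc0 hy
  have e : (∑' n : ℕ, cc (n+1) * (((n:ℝ)+1) * y ^ n)) = G1 y :=
    tsum_congr fun n => by ring
  rw [e] at h
  exact h

lemma hG1 {y : ℝ} (hy : y ∈ Set.Ioo (-(3/4):ℝ) (3/4)) : HasDerivAt G1 (G2 y) y := by
  have h := hasDerivAt_psum bd_cc1 hy
  have e : (∑' n : ℕ, (((n+1:ℕ):ℝ)+1) * cc (n+1+1) * (((n:ℝ)+1) * y ^ n)) = G2 y :=
    tsum_congr fun n => by push_cast; ring_nf
  rw [e] at h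
  exact h

lemma hG2 {y : ℝ} (hy : y ∈ Set.Ioo (-(3/4):ℝ) (3/4)) : HasDerivAt G2 (G3 y) y := by
  have h := hasDerivAt_psum bd_cc2 hy
  have e : (∑' n : ℕ, (((n+1:ℕ):ℝ)+1) * (((n+1:ℕ):ℝ)+2) * cc (n+1+2) * (((n:ℝ)+1) * y ^ n))
      = G3 y := tsum_congr fun n => by push_cast; ring_nf
  rw [e] at h
  exact h

lemma ode {m : ℝ} (hm : m ∈ Set.Ioo (-(3/4):ℝ) (3/4)) :
    m * (1-m) * G2 m + (1-2*m) * G1 m - G0 m / 4 = 0 := by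
  have hm34 : |m| ≤ 3/4 := le_of_lt (abs_lt.2 ⟨hm.1, hm.2⟩)
  have hn : ∀ n : ℕ, (0:ℝ) ≤ (n:ℝ) := fun n => Nat.cast_nonneg n
  have hq0 : ∀ n : ℕ, (0:ℝ) ≤ (n:ℝ) * ((n:ℝ)-1) := by
    intro n
    match n with
    | 0 => norm_num
    | (k+1) => have := hn k; push_cast; nlinarith
  have S0 : Summable (fun n : ℕ => cc n * m^n) :=
    summable_bd hm34 (bd23 bd_cc0)
  have S1 : Summable (fun n : ℕ => ((n:ℝ)+1) * cc (n+1) * m^n) :=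
    summable_bd hm34 (bd23 bd_cc1)
  have Sq : Summable (fun n : ℕ => (n:ℝ) * ((n:ℝ)+1) * cc (n+1) * m^n) :=
    summable_bd hm34 (fun n => coeff_bd (by nlinarith [hn n]) (by nlinarith [hn n, mul_nonneg (hn n) (hn n), mul_nonneg (mul_nonneg (hn n) (hn n)) (hn n)]) (n+1))
  have Sr : Summable (fun n : ℕ => (n:ℝ) * cc n * m^n) :=
    summable_bd hm34 (fun n => coeff_bd (hn n) (by nlinarith [hn n, mul_nonneg (hn n) (hn n), mul_nonneg (mul_nonneg (hn n) (hn n)) (hn n)]) n)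
  have Ss : Summable (fun n : ℕ => (n:ℝ) * ((n:ℝ)-1) * cc n * m^n) :=
    summable_bd hm34 (fun n => coeff_bd (hq0 n) (by nlinarith [hn n, mul_nonneg (hn n) (hn n), mul_nonneg (mul_nonneg (hn n) (hn n)) (hn n)]) n)
  have SA : Summable (fun n : ℕ => (((n:ℝ)+1)^2 * cc (n+1)) * m^n) :=
    summable_bd hm34 (fun n => coeff_bd (by positivity) (by nlinarith [hn n, mul_nonneg (hn n) (hn n), mul_nonneg (mul_nonneg (hn n) (hn n)) (hn n)]) (n+1))
  have e2 : m * G2 m = ∑' n : ℕ, (n:ℝ) * ((n:ℝ)+1) * cc (n+1) * m^n := by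
    rw [G2, ← tsum_mul_left]
    conv_rhs => rw [tsum_shift Sq (by norm_num)]
    exact tsum_congr fun n => by push_cast; ring
  have e1 : m * G1 m = ∑' n : ℕ, (n:ℝ) * cc n * m^n := by
    rw [G1, ← tsum_mul_left]
    conv_rhs => rw [tsum_shift Sr (by norm_num)]
    exact tsum_congr fun n => by push_cast; ring
  have e22 : m * (m * G2 m) = ∑' n : ℕ, (n:ℝ) * ((n:ℝ)-1) * cc n * m^n := by
    rw [e2, ← tsum_mul_left]
    conv_rhs => rw [tsum_shift Ss (by norm_num)]
    exact tsum_congr fun n => by push_cast; ring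
  have eA : G1 m + m * G2 m = ∑' n : ℕ, (((n:ℝ)+1)^2 * cc (n+1)) * m^n := by
    rw [G1, e2, ← Summable.tsum_add S1 Sq]
    exact tsum_congr fun n => by ring
  have T12 : (∑' n : ℕ, (((n:ℝ)+1)^2 * cc (n+1)) * m^n)
      = ∑' n : ℕ, (((n:ℝ)+1/2)^2 * cc n) * m^n :=
    tsum_congr fun n => by rw [cc_rec]
  have EqB : (∑' n : ℕ, (((n:ℝ)+1/2)^2 * cc n) * m^n)
      = (1/4) * G0 m + (2*(m*G1 m) + m*(m*G2 m)) := by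
    have step : ∀ n : ℕ, (((n:ℝ)+1/2)^2 * cc n) * m^n
        = (1/4) * (cc n * m^n) + (2*((n:ℝ) * cc n * m^n) + (n:ℝ)*((n:ℝ)-1)*cc n * m^n) :=
      fun n => by ring
    rw [tsum_congr step, Summable.tsum_add (S0.mul_left (1/4)) ((Sr.mul_left 2).add Ss),
      Summable.tsum_add (Sr.mul_left 2) Ss, tsum_mul_left, tsum_mul_left, ← e1, ← e22, G0]
  linear_combination eA + T12 + EqB

lemma ode' {m : ℝ} (hm : m ∈ Set.Ioo (-(3/4):ℝ) (3/4)) :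
    m * (1-m) * G3 m + 2*(1-2*m) * G2 m - (9/4) * G1 m = 0 := by
  have hφ : HasDerivAt (fun y => y * (1-y) * G2 y + (1-2*y) * G1 y - G0 y / 4)
      (((1-2*m) * G2 m + (m*(1-m)) * G3 m) + ((-2) * G1 m + (1-2*m) * G2 m)
        - G1 m / 4) m := by
    have hpoly1 : HasDerivAt (fun y : ℝ => y * (1-y)) (1-2*m) m := by
      have := (hasDerivAt_id m).mul ((hasDerivAt_id m).const_sub 1)
      refine this.congr_deriv ?_
      simp only [id_eq]
      ring
    have hpoly2 : HasDerivAt (fun y : ℝ => 1-2*y) (-2 : ℝ) m := by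
      have := ((hasDerivAt_id m).const_mul 2).const_sub 1
      refine this.congr_deriv ?_
      norm_num
    exact ((hpoly1.mul (hG2 hm)).add (hpoly2.mul (hG1 hm))).sub ((hG0 hm).div_const 4)
  have heq : (fun y => y * (1-y) * G2 y + (1-2*y) * G1 y - G0 y / 4)
      =ᶠ[nhds m] (fun _ => (0:ℝ)) :=
    Filter.eventuallyEq_of_mem (isOpen_Ioo.mem_nhds hm) (fun y hy => ode hy)
  have hz : HasDerivAt (fun _ : ℝ => (0:ℝ))
      (((1-2*m) * G2 m + (m*(1-m)) * G3 m) + ((-2) * G1 m + (1-2*m) * G2 m)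
        - G1 m / 4) m := (heq.hasDerivAt_iff).1 hφ
  have := hz.unique (hasDerivAt_const m 0)
  linear_combination this

noncomputable def bb (t : ℝ) : ℝ := Real.sqrt (1 + t^2)
noncomputable def mm (t : ℝ) : ℝ := (1 - bb t) / 2
noncomputable def FF (t : ℝ) : ℝ := G0 (mm t)
noncomputable def FF1 (t : ℝ) : ℝ := G1 (mm t) * (-t / (2 * bb t))
noncomputable def FF2 (t : ℝ) : ℝ :=
  G2 (mm t) * (-t / (2 * bb t))^2 + G1 (mm t) * (-1 / (2 * bb t^3))
noncomputable def FF3 (t : ℝ) : ℝ :=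
  G3 (mm t) * (-t / (2 * bb t))^3 + 3 * G2 (mm t) * (-t / (2 * bb t)) * (-1 / (2 * bb t^3))
    + G1 (mm t) * (3*t / (2 * bb t^5))

lemma bb_pos {t : ℝ} (ht : t ∈ Set.Ioo (0:ℝ) 1) : 1 ≤ bb t := by
  have h : Real.sqrt 1 ≤ Real.sqrt (1 + t^2) := Real.sqrt_le_sqrt (by nlinarith [ht.1])
  simpa [Real.sqrt_one, bb] using h

lemma bb_sq {t : ℝ} : bb t ^ 2 = 1 + t^2 := Real.sq_sqrt (by positivity)

lemma bb_lt {t : ℝ} (ht : t ∈ Set.Ioo (0:ℝ) 1) : bb t < 5/2 := by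
  nlinarith [bb_sq (t := t), bb_pos ht, ht.1, ht.2]

lemma mm_mem {t : ℝ} (ht : t ∈ Set.Ioo (0:ℝ) 1) :
    mm t ∈ Set.Ioo (-(3/4):ℝ) (3/4) := by
  constructor
  · have := bb_lt ht
    rw [mm]; linarith
  · have := bb_pos ht
    rw [mm]; linarith

lemma hbb {t : ℝ} (ht : t ∈ Set.Ioo (0:ℝ) 1) : HasDerivAt bb (t / bb t) t := by
  have h2 : HasDerivAt (fun x : ℝ => 1 + x^2) (2*t) t := by
    have := (hasDerivAt_pow 2 t).const_add 1
    refine this.congr_deriv ?_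
    push_cast
    ring
  have hne : (1 + t^2) ≠ 0 := by positivity
  have := (Real.hasDerivAt_sqrt hne).comp t h2
  refine this.congr_deriv ?_
  rw [bb]
  have hbne : Real.sqrt (1 + t^2) ≠ 0 := by positivity
  field_simp

lemma hmm {t : ℝ} (ht : t ∈ Set.Ioo (0:ℝ) 1) : HasDerivAt mm (-t / (2 * bb t)) t := by
  have := ((hbb ht).const_sub 1).div_const 2
  refine this.congr_deriv ?_
  ring

lemma hmu1 {t : ℝ} (ht : t ∈ Set.Ioo (0:ℝ) 1) :
    HasDerivAt (fun x => -x / (2 * bb x)) (-1 / (2 * bb t^3)) t := by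
  have hbne : bb t ≠ 0 := by have := bb_pos ht; linarith
  have hdne : 2 * bb t ≠ 0 := by positivity
  have hnum : HasDerivAt (fun x : ℝ => -x) (-1 : ℝ) t := (hasDerivAt_id t).neg
  have := hnum.div ((hbb ht).const_mul 2) hdne
  refine this.congr_deriv ?_
  rw [div_eq_div_iff (by positivity) (by positivity)]
  field_simp
  linear_combination (-1) * bb_sq (t := t)

lemma hmu2 {t : ℝ} (ht : t ∈ Set.Ioo (0:ℝ) 1) :
    HasDerivAt (fun x => -1 / (2 * bb x^3)) (3*t / (2 * bb t^5)) t := by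
  have hb1 := bb_pos ht
  have hbne : bb t ≠ 0 := by linarith
  have hdne : 2 * bb t^3 ≠ 0 := by positivity
  have := (hasDerivAt_const t (-1:ℝ)).div (((hbb ht).pow 3).const_mul 2) hdne
  refine this.congr_deriv ?_
  simp only [Pi.pow_apply]
  rw [div_eq_div_iff (by positivity) (by positivity)]
  field_simp
  ring

lemma hFF {t : ℝ} (ht : t ∈ Set.Ioo (0:ℝ) 1) : HasDerivAt FF (FF1 t) t := by
  have h := (hG0 (mm_mem ht)).comp t (hmm ht)
  exact h

lemma hFF1 {t : ℝ} (ht : t ∈ Set.Ioo (0:ℝ) 1) : HasDerivAt FF1 (FF2 t) t := by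
  have h := ((hG1 (mm_mem ht)).comp t (hmm ht)).mul (hmu1 ht)
  refine h.congr_deriv ?_
  simp only [Function.comp_apply]
  rw [FF2]
  ring

lemma hFF2 {t : ℝ} (ht : t ∈ Set.Ioo (0:ℝ) 1) : HasDerivAt FF2 (FF3 t) t := by
  have h1 := ((hG2 (mm_mem ht)).comp t (hmm ht)).mul ((hmu1 ht).pow 2)
  have h2 := ((hG1 (mm_mem ht)).comp t (hmm ht)).mul (hmu2 ht)
  have h := h1.add h2
  refine h.congr_deriv ?_
  simp only [Function.comp_apply, Pi.pow_apply]
  rw [FF3]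
  push_cast
  ring

lemma hAt {t : ℝ} (ht : t ∈ Set.Ioo (0:ℝ) 1) :
    t * (1 + t^2) * FF2 t + (1 + 2*t^2) * FF1 t + (t/4) * FF t = 0 := by
  have hb1 := bb_pos ht
  have hbne : bb t ≠ 0 := by linarith
  have hb2 := bb_sq (t := t)
  have hode := ode (mm_mem ht)
  rw [mm] at hode
  have hX : G0 ((1 - bb t)/2) = 4 * ((1 - bb t)/2 * (1 - (1 - bb t)/2) * G2 ((1 - bb t)/2)
      + (1 - 2*((1 - bb t)/2)) * G1 ((1 - bb t)/2)) := by linear_combination -4 * hode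
  rw [FF2, FF1, FF, mm, hX]
  field_simp
  linear_combination (- t*bb t^3*G2 ((1-bb t)/2) + 4*t*bb t^2*G1 ((1-bb t)/2)
    - t^3*bb t*G2 ((1-bb t)/2) + 2*t*G1 ((1-bb t)/2)) * hb2

noncomputable def ff (t : ℝ) : ℝ := (Real.pi/2)^2 * FF t^2
noncomputable def ff1 (t : ℝ) : ℝ := (Real.pi/2)^2 * (2 * FF t * FF1 t)
noncomputable def ff2 (t : ℝ) : ℝ := (Real.pi/2)^2 * (2 * FF1 t^2 + 2 * FF t * FF2 t)
noncomputable def ff3 (t : ℝ) : ℝ := (Real.pi/2)^2 * (6 * FF1 t * FF2 t + 2 * FF t * FF3 t)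

lemma hff {t : ℝ} (ht : t ∈ Set.Ioo (0:ℝ) 1) : HasDerivAt ff (ff1 t) t := by
  unfold ff ff1
  have := ((hFF ht).pow 2).const_mul ((Real.pi/2)^2)
  refine this.congr_deriv ?_
  push_cast
  ring

lemma hff1 {t : ℝ} (ht : t ∈ Set.Ioo (0:ℝ) 1) : HasDerivAt ff1 (ff2 t) t := by
  unfold ff1 ff2
  have := (((hFF ht).const_mul 2).mul (hFF1 ht)).const_mul ((Real.pi/2)^2)
  refine this.congr_deriv ?_
  ring

lemma hff2 {t : ℝ} (ht : t ∈ Set.Ioo (0:ℝ) 1) : HasDerivAt ff2 (ff3 t) t := by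
  unfold ff2 ff3
  have := ((((hFF1 ht).pow 2).const_mul 2).add
    (((hFF ht).const_mul 2).mul (hFF2 ht))).const_mul ((Real.pi/2)^2)
  refine this.congr_deriv ?_
  push_cast
  ring

lemma hIter2 : ∀ t ∈ Set.Ioo (0:ℝ) 1, iteratedDeriv 2 ff t = ff2 t := by
  intro t ht
  rw [iteratedDeriv_succ, iteratedDeriv_one]
  have E1t : deriv ff =ᶠ[nhds t] ff1 :=
    Filter.eventuallyEq_of_mem (isOpen_Ioo.mem_nhds ht) (fun u hu => (hff hu).deriv)
  rw [E1t.deriv_eq]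
  exact (hff1 ht).deriv

theorem stmt5 (a : ℝ) (ha : a ∈ Set.Ioo (0:ℝ) 1) :
    let f : ℝ → ℝ := fun t => Ksq ((1 - Real.sqrt (1 + t ^ 2)) / 2) ^ 2
    a ^ 2 * (1 + a ^ 2) * iteratedDeriv 3 f a + 3 * a * (1 + 2 * a ^ 2) * iteratedDeriv 2 f a +
      (1 + 7 * a ^ 2) * deriv f a + a * f a = 0 := by
  intro f
  have hKsq : ∀ x, Ksq x = (Real.pi/2) * G0 x := fun x => rfl
  have hfe : f = ff := by
    funext t
    show Ksq ((1 - Real.sqrt (1 + t ^ 2)) / 2) ^ 2 = ff t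
    rw [show ((1 - Real.sqrt (1 + t ^ 2)) / 2) = mm t from rfl, hKsq, ff, FF]
    ring
  rw [hfe]
  have h1 : deriv ff a = ff1 a := (hff ha).deriv
  have h2 : iteratedDeriv 2 ff a = ff2 a := hIter2 a ha
  have h3 : iteratedDeriv 3 ff a = ff3 a := by
    rw [show (3:ℕ) = 2+1 from rfl, iteratedDeriv_succ]
    have E2 : iteratedDeriv 2 ff =ᶠ[nhds a] ff2 :=
      Filter.eventuallyEq_of_mem (isOpen_Ioo.mem_nhds ha) hIter2
    rw [E2.deriv_eq]
    exact (hff2 ha).deriv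
  rw [h1, h2, h3]
  have hA := hAt ha
  have hB : a*(1+a^2)*FF3 a + (2+5*a^2)*FF2 a + (17*a/4)*FF1 a + (1/4)*FF a = 0 := by
    have p1 : HasDerivAt (fun x : ℝ => x*(1+x^2)) (1+3*a^2) a := by
      have := (hasDerivAt_id a).mul ((hasDerivAt_pow 2 a).const_add 1)
      refine this.congr_deriv ?_
      simp only [id_eq]
      push_cast
      ring
    have p2 : HasDerivAt (fun x : ℝ => 1+2*x^2) (4*a) a := by
      have := ((hasDerivAt_pow 2 a).const_mul 2).const_add 1
      refine this.congr_deriv ?_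
      push_cast
      ring
    have p3 : HasDerivAt (fun x : ℝ => x/4) (1/4 : ℝ) a :=
      (hasDerivAt_id a).div_const 4
    have hΦ : HasDerivAt (fun x => x*(1+x^2)*FF2 x + (1+2*x^2)*FF1 x + (x/4)*FF x)
        (((1+3*a^2)*FF2 a + (a*(1+a^2))*FF3 a) + ((4*a)*FF1 a + (1+2*a^2)*FF2 a)
          + ((1/4)*FF a + (a/4)*FF1 a)) a :=
      ((p1.mul (hFF2 ha)).add (p2.mul (hFF1 ha))).add (p3.mul (hFF ha))
    have heq : (fun x => x*(1+x^2)*FF2 x + (1+2*x^2)*FF1 x + (x/4)*FF x)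
        =ᶠ[nhds a] (fun _ => (0:ℝ)) :=
      Filter.eventuallyEq_of_mem (isOpen_Ioo.mem_nhds ha) (fun u hu => hAt hu)
    have hz := ((heq.hasDerivAt_iff).1 hΦ).unique (hasDerivAt_const a 0)
    linear_combination hz
  unfold ff ff1 ff2 ff3
  linear_combination ((Real.pi/2)^2*2*a*FF a) * hB
    + ((Real.pi/2)^2*(6*a*FF1 a + 2*FF a)) * hA
end

section
/- ∫₀¹ K(2√(x(1-x))) · x(1-x) / (1 - 2x(1-x))^{3/2} dx = π/(2√2). -/
open MeasureTheory Real Filter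

open intervalIntegral Set

noncomputable def hh (p q : ℝ) : ℝ :=
  2 * Real.sqrt 2 * Real.sin p * Real.sin q /
    ((Real.sin p ^ 2 + Real.sin q ^ 2) * Real.sqrt (Real.sin p ^ 2 + Real.sin q ^ 2))

lemma hh_cont {q : ℝ} (hq : Real.sin q ≠ 0) : Continuous fun p => hh p q := by
  apply Continuous.div (by fun_prop) (by fun_prop)
  intro p
  have h1 : Real.sin p ^ 2 + Real.sin q ^ 2 > 0 := by positivity
  positivity

/-- FTC1 -/
lemma ftc1 {q : ℝ} (hq : q ∈ Set.Ioo 0 Real.pi) :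
    ∫ p in (0:ℝ)..(Real.pi - q), hh p q
      = (2 * Real.cos q + 2 * Real.sqrt 2) / (1 + Real.sin q ^ 2) := by
  have hs : 0 < Real.sin q := Real.sin_pos_of_pos_of_lt_pi hq.1 hq.2
  set B : ℝ := 1 + Real.sin q ^ 2 with hB
  have hBpos : 0 < B := by positivity
  have key : ∀ p : ℝ, HasDerivAt
      (fun p => -(2 * Real.sqrt 2 * Real.sin q / B) * (Real.cos p / Real.sqrt (B - Real.cos p ^ 2)))
      (hh p q) p := by
    intro p
    have hpy := Real.sin_sq_add_cos_sq p
    have hEpos : 0 < B - Real.cos p ^ 2 := by rw [hB]; nlinarith [hs]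
    have hSpos : 0 < Real.sqrt (B - Real.cos p ^ 2) := Real.sqrt_pos.2 hEpos
    have hS2 : Real.sqrt (B - Real.cos p ^ 2) ^ 2 = B - Real.cos p ^ 2 :=
      Real.sq_sqrt hEpos.le
    have h1 : HasDerivAt (fun p : ℝ => B - Real.cos p ^ 2)
        (2 * Real.cos p * Real.sin p) p := by
      have := ((Real.hasDerivAt_cos p).pow 2).const_sub B
      exact this.congr_deriv (by ring)
    have h2 := h1.sqrt hEpos.ne'
    have h3 := (Real.hasDerivAt_cos p).div h2 hSpos.ne'
    have h4 := h3.const_mul (-(2 * Real.sqrt 2 * Real.sin q / B))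
    refine h4.congr_deriv ?_
    rw [hh]
    have hE' : Real.sin p ^ 2 + Real.sin q ^ 2 = B - Real.cos p ^ 2 := by
      rw [hB]; ring_nf; linarith [hpy]
    rw [hE']
    set S := Real.sqrt (B - Real.cos p ^ 2) with hS
    rw [← hS2]
    have hBS : B = S ^ 2 + Real.cos p ^ 2 := by rw [hS2]; ring
    field_simp
    linear_combination (-Real.sin p) * hBS
  have hint : IntervalIntegrable (fun p => hh p q) volume 0 (Real.pi - q) :=
    (hh_cont hs.ne').intervalIntegrable _ _
  rw [intervalIntegral.integral_eq_sub_of_hasDerivAt (fun p _ => key p) hint]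
  have hcos : Real.cos (Real.pi - q) = -Real.cos q := Real.cos_pi_sub q
  rw [hcos]
  have h2s : B - (-Real.cos q) ^ 2 = 2 * Real.sin q ^ 2 := by
    rw [hB]; nlinarith [Real.sin_sq_add_cos_sq q]
  have h0 : B - Real.cos 0 ^ 2 = Real.sin q ^ 2 := by
    rw [hB, Real.cos_zero]; ring
  rw [h2s, h0]
  have hsq : Real.sqrt (2 * Real.sin q ^ 2) = Real.sqrt 2 * Real.sin q := by
    rw [Real.sqrt_mul (by norm_num), Real.sqrt_sq hs.le]
  rw [hsq, Real.sqrt_sq hs.le, Real.cos_zero]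
  have h2pos : (0:ℝ) < Real.sqrt 2 := by positivity
  field_simp
  ring


lemma cont_den : Continuous fun q : ℝ => (1 + Real.sin q ^ 2) := by fun_prop

lemma den_pos (q : ℝ) : (0:ℝ) < 1 + Real.sin q ^ 2 := by positivity

lemma integrable_piece (c : ℝ) (a b : ℝ) :
    IntervalIntegrable (fun q => (c * Real.cos q + Real.sqrt 2) / (1 + Real.sin q ^ 2)) volume a b := by
  apply Continuous.intervalIntegrable
  exact Continuous.div (by fun_prop) cont_den (fun q => (den_pos q).ne')

/-- the arcsin antiderivative part : ∫ q in 0..π/2, √2/(1+sin²q) = π/2·(1/√2)·... precisely: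
∫ q in 0..π/2, 2*√2/(1+sin q^2) dq = π -/
lemma ftc2b : ∫ q in (0:ℝ)..(Real.pi/2), 2 * Real.sqrt 2 / (1 + Real.sin q ^ 2) = Real.pi := by
  have h2 : (0:ℝ) < Real.sqrt 2 := by positivity
  set G : ℝ → ℝ := fun q => 2 * Real.arcsin (Real.sqrt 2 * Real.sin q / Real.sqrt (1 + Real.sin q ^ 2)) with hG
  have hcontG : ContinuousOn G (Set.Icc 0 (Real.pi/2)) := by
    apply Continuous.continuousOn
    apply Continuous.mul continuous_const
    apply Real.continuous_arcsin.comp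
    exact Continuous.div (by fun_prop) (by fun_prop) (fun q => (Real.sqrt_pos.2 (den_pos q)).ne')
  have hderiv : ∀ q ∈ Set.Ioo (0:ℝ) (Real.pi/2),
      HasDerivAt G (2 * Real.sqrt 2 / (1 + Real.sin q ^ 2)) q := by
    intro q hq
    have hc : 0 < Real.cos q := Real.cos_pos_of_mem_Ioo ⟨by linarith [hq.1, Real.pi_pos], hq.2⟩
    have hs : 0 < Real.sin q := Real.sin_pos_of_pos_of_lt_pi hq.1 (by linarith [hq.2, Real.pi_pos])
    have hpy := Real.sin_sq_add_cos_sq q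
    have hDpos := den_pos q
    have hTpos : 0 < Real.sqrt (1 + Real.sin q ^ 2) := Real.sqrt_pos.2 hDpos
    have hT2 : Real.sqrt (1 + Real.sin q ^ 2) ^ 2 = 1 + Real.sin q ^ 2 := Real.sq_sqrt hDpos.le
    -- g q = √2 sin q / √(1+sin²q)
    have hgder : HasDerivAt (fun q => Real.sqrt 2 * Real.sin q / Real.sqrt (1 + Real.sin q ^ 2))
        ((Real.sqrt 2 * Real.cos q * Real.sqrt (1 + Real.sin q ^ 2) -
          Real.sqrt 2 * Real.sin q * ((2 * Real.sin q * Real.cos q) / (2 * Real.sqrt (1 + Real.sin q ^ 2)))) /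
          Real.sqrt (1 + Real.sin q ^ 2) ^ 2) q := by
      have h1 : HasDerivAt (fun q : ℝ => 1 + Real.sin q ^ 2) (2 * Real.sin q * Real.cos q) q := by
        have := ((Real.hasDerivAt_sin q).pow 2).const_add (1:ℝ)
        exact this.congr_deriv (by ring)
      have h2' := h1.sqrt hDpos.ne'
      have h3 := ((Real.hasDerivAt_sin q).const_mul (Real.sqrt 2)).div h2' hTpos.ne'
      exact h3.congr_deriv (by ring)
    have harg : Real.sqrt 2 * Real.sin q / Real.sqrt (1 + Real.sin q ^ 2) < 1 := by
      rw [div_lt_one hTpos]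
      have : (Real.sqrt 2 * Real.sin q) ^ 2 < Real.sqrt (1 + Real.sin q ^ 2) ^ 2 := by
        rw [hT2, mul_pow, Real.sq_sqrt (by norm_num : (2:ℝ) ≥ 0)]
        nlinarith
      nlinarith [hTpos, mul_pos h2 hs]
    have harg' : -1 < Real.sqrt 2 * Real.sin q / Real.sqrt (1 + Real.sin q ^ 2) := by
      have : 0 < Real.sqrt 2 * Real.sin q / Real.sqrt (1 + Real.sin q ^ 2) := by positivity
      linarith
    have harcsin := (Real.hasDerivAt_arcsin harg'.ne' harg.ne).comp q hgder
    have := harcsin.const_mul (2:ℝ)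
    refine this.congr_deriv ?_
    -- now the algebra
    have h1mg : 1 - (Real.sqrt 2 * Real.sin q / Real.sqrt (1 + Real.sin q ^ 2)) ^ 2
        = Real.cos q ^ 2 / (1 + Real.sin q ^ 2) := by
      rw [div_pow, hT2, mul_pow, Real.sq_sqrt (by norm_num : (2:ℝ) ≥ 0)]
      field_simp
      nlinarith [hpy]
    rw [h1mg]
    have hrt : Real.sqrt (Real.cos q ^ 2 / (1 + Real.sin q ^ 2))
        = Real.cos q / Real.sqrt (1 + Real.sin q ^ 2) := by
      rw [Real.sqrt_div (sq_nonneg _), Real.sqrt_sq hc.le]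
    rw [hrt]
    generalize hT : Real.sqrt (1 + Real.sin q ^ 2) = T at *
    rw [← hT2]
    field_simp
    ring_nf
    linear_combination hT2
  have := intervalIntegral.integral_eq_sub_of_hasDeriv_right_of_le
    (by positivity : (0:ℝ) ≤ Real.pi/2) hcontG
    (fun q hq => (hderiv q hq).hasDerivWithinAt)
    (by
      apply Continuous.intervalIntegrable
      exact Continuous.div (by fun_prop) cont_den (fun q => (den_pos q).ne'))
  rw [this, hG]
  simp only [Real.sin_pi_div_two, Real.sin_zero]
  norm_num
  ring

lemma integrable_piece' (c : ℝ) (a b : ℝ) :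
    IntervalIntegrable (fun q => (Real.cos q * c + Real.sqrt 2) / (1 + Real.sin q ^ 2)) volume a b := by
  apply Continuous.intervalIntegrable
  exact Continuous.div (by fun_prop) cont_den (fun q => (den_pos q).ne')

lemma ftc2 : ∫ q in (0:ℝ)..Real.pi, (Real.cos q + Real.sqrt 2) / (1 + Real.sin q ^ 2) = Real.pi := by
  have hsplit := intervalIntegral.integral_add_adjacent_intervals
    (a := (0:ℝ)) (b := Real.pi/2) (c := Real.pi)
    (f := fun q => (Real.cos q + Real.sqrt 2) / (1 + Real.sin q ^ 2))
    (by simpa using integrable_piece' 1 0 (Real.pi/2))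
    (by simpa using integrable_piece' 1 (Real.pi/2) Real.pi)
  rw [← hsplit]
  have hrefl : ∫ q in (Real.pi/2)..Real.pi, (Real.cos q + Real.sqrt 2) / (1 + Real.sin q ^ 2)
      = ∫ q in (0:ℝ)..(Real.pi/2), (-Real.cos q + Real.sqrt 2) / (1 + Real.sin q ^ 2) := by
    have := intervalIntegral.integral_comp_sub_left (a := (0:ℝ)) (b := Real.pi/2)
      (fun q => (Real.cos q + Real.sqrt 2) / (1 + Real.sin q ^ 2)) Real.pi
    simp only [Real.cos_pi_sub, Real.sin_pi_sub] at this
    have e1 : Real.pi - Real.pi/2 = Real.pi/2 := by ring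
    have e2 : Real.pi - 0 = Real.pi := by ring
    rw [e1, e2] at this
    rw [← this]
  rw [hrefl, ← intervalIntegral.integral_add
    (by simpa using integrable_piece' 1 0 (Real.pi/2))
    (by simpa using integrable_piece' (-1) 0 (Real.pi/2))]
  calc (∫ q in (0:ℝ)..(Real.pi/2), ((Real.cos q + Real.sqrt 2) / (1 + Real.sin q ^ 2)
          + (-Real.cos q + Real.sqrt 2) / (1 + Real.sin q ^ 2)))
      = ∫ q in (0:ℝ)..(Real.pi/2), 2 * Real.sqrt 2 / (1 + Real.sin q ^ 2) := by
        apply intervalIntegral.integral_congr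
        intro q _
        simp only []
        rw [← add_div]
        congr 1
        ring
    _ = Real.pi := ftc2b

noncomputable def VV (θ α : ℝ) : ℝ :=
  (Real.sin θ ^ 2 * Real.cos α ^ 2 - Real.cos θ ^ 2 * Real.sin α ^ 2) /
    ((Real.sin θ ^ 2 * Real.cos α ^ 2 + Real.cos θ ^ 2 * Real.sin α ^ 2) *
      Real.sqrt (Real.sin θ ^ 2 * Real.cos α ^ 2 + Real.cos θ ^ 2 * Real.sin α ^ 2))

noncomputable def W (u θ : ℝ) : ℝ :=
  (1 - u ^ 2) / ((1 + u ^ 2) * Real.sqrt (1 + u ^ 2)) *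
    (1 / Real.sqrt (Real.cos θ ^ 2 + u ^ 2 * Real.sin θ ^ 2))

lemma Vh (θ q : ℝ) : VV θ (θ - q) = hh (2*θ - q) q := by
  have hsq : Real.sin q = Real.sin θ * Real.cos (θ - q) - Real.cos θ * Real.sin (θ - q) := by
    have := Real.sin_sub θ (θ - q)
    rw [show θ - (θ - q) = q by ring] at this
    rw [this]
  have hs2 : Real.sin (2*θ - q) = Real.sin θ * Real.cos (θ - q) + Real.cos θ * Real.sin (θ - q) := by
    have := Real.sin_add θ (θ - q)
    rw [show θ + (θ - q) = 2*θ - q by ring] at this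
    rw [this]
  have hN : Real.sin (2*θ - q) * Real.sin q
      = Real.sin θ ^ 2 * Real.cos (θ - q) ^ 2 - Real.cos θ ^ 2 * Real.sin (θ - q) ^ 2 := by
    rw [hsq, hs2]; ring
  have hE : Real.sin (2*θ - q) ^ 2 + Real.sin q ^ 2
      = 2 * (Real.sin θ ^ 2 * Real.cos (θ - q) ^ 2 + Real.cos θ ^ 2 * Real.sin (θ - q) ^ 2) := by
    rw [hsq, hs2]; ring
  rw [hh, hE, Real.sqrt_mul (by norm_num : (0:ℝ) ≤ 2)]
  rw [VV, ← hN]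
  rw [show 2 * Real.sqrt 2 * Real.sin (2*θ-q) * Real.sin q
      = (2 * Real.sqrt 2) * (Real.sin (2*θ-q) * Real.sin q) by ring]
  rw [show 2 * (Real.sin θ ^ 2 * Real.cos (θ - q) ^ 2 + Real.cos θ ^ 2 * Real.sin (θ - q) ^ 2) *
        (Real.sqrt 2 * Real.sqrt (Real.sin θ ^ 2 * Real.cos (θ - q) ^ 2 + Real.cos θ ^ 2 * Real.sin (θ - q) ^ 2))
      = (2 * Real.sqrt 2) * ((Real.sin θ ^ 2 * Real.cos (θ - q) ^ 2 + Real.cos θ ^ 2 * Real.sin (θ - q) ^ 2) *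
          Real.sqrt (Real.sin θ ^ 2 * Real.cos (θ - q) ^ 2 + Real.cos θ ^ 2 * Real.sin (θ - q) ^ 2)) by ring]
  rw [mul_div_mul_left _ _ (by positivity : (2:ℝ) * Real.sqrt 2 ≠ 0)]

lemma sub2 (q : ℝ) :
    ∫ θ in (q/2)..(Real.pi/2), hh (2*θ - q) q
      = (1/2) * ∫ p in (0:ℝ)..(Real.pi - q), hh p q := by
  have h := intervalIntegral.integral_comp_mul_sub (a := q/2) (b := Real.pi/2)
    (fun p => hh p q) (two_ne_zero) q
  rw [show (2:ℝ) * (q/2) - q = 0 by ring, show (2:ℝ) * (Real.pi/2) - q = Real.pi - q by ring] at h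
  rw [h, smul_eq_mul]
  norm_num

lemma W_cont {θ : ℝ} (hθ : θ ∈ Set.Ioo 0 (Real.pi/2)) : Continuous fun u => W u θ := by
  have hc : 0 < Real.cos θ := Real.cos_pos_of_mem_Ioo ⟨by linarith [hθ.1, Real.pi_pos], hθ.2⟩
  apply Continuous.mul
  · apply Continuous.div (by fun_prop) (by fun_prop)
    intro u
    have h1 : (0:ℝ) < 1 + u ^ 2 := by positivity
    positivity
  · apply Continuous.div continuous_const (by fun_prop)
    intro u
    have h1 : (0:ℝ) < Real.cos θ ^ 2 + u ^ 2 * Real.sin θ ^ 2 := by positivity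
    positivity

lemma sub1 {θ : ℝ} (hθ : θ ∈ Set.Ioo 0 (Real.pi/2)) :
    ∫ u in (-1:ℝ)..1, W u θ = ∫ α in (-θ)..θ, VV θ α := by
  have hθ2 : θ < Real.pi/2 := hθ.2
  have hθ0 : 0 < θ := hθ.1
  have hc : 0 < Real.cos θ := Real.cos_pos_of_mem_Ioo ⟨by linarith [Real.pi_pos], hθ2⟩
  have hs : 0 < Real.sin θ := Real.sin_pos_of_pos_of_lt_pi hθ0 (by linarith [Real.pi_pos])
  set g : ℝ → ℝ := fun α => (Real.cos θ / Real.sin θ) * Real.tan α with hg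
  have huIcc : Set.uIcc (-θ) θ = Set.Icc (-θ) θ := Set.uIcc_of_le (by linarith)
  have hcosα : ∀ α ∈ Set.uIcc (-θ) θ, 0 < Real.cos α := by
    intro α hα
    rw [huIcc] at hα
    exact Real.cos_pos_of_mem_Ioo ⟨by cases' hα with h1 h2; linarith, by cases' hα with h1 h2; linarith⟩
  have hder : ∀ α ∈ Set.uIcc (-θ) θ,
      HasDerivAt g ((Real.cos θ / Real.sin θ) * (1 / Real.cos α ^ 2)) α := by
    intro α hα
    exact (Real.hasDerivAt_tan (hcosα α hα).ne').const_mul _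
  have hcont' : ContinuousOn (fun α => (Real.cos θ / Real.sin θ) * (1 / Real.cos α ^ 2))
      (Set.uIcc (-θ) θ) := by
    apply ContinuousOn.mul continuousOn_const
    apply ContinuousOn.div continuousOn_const (by fun_prop)
    intro α hα
    exact pow_ne_zero 2 (hcosα α hα).ne'
  have hsub := intervalIntegral.integral_comp_smul_deriv hder hcont' (W_cont hθ)
  have hg1 : g θ = 1 := by
    simp only [hg, Real.tan_eq_sin_div_cos]
    field_simp <;> ring
  have hgm1 : g (-θ) = -1 := by
    simp only [hg, Real.tan_eq_sin_div_cos, Real.sin_neg, Real.cos_neg]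
    field_simp <;> ring
  rw [hg1, hgm1] at hsub
  rw [← hsub]
  apply intervalIntegral.integral_congr
  intro α hα
  have hcα : 0 < Real.cos α := hcosα α hα
  have hpyα := Real.sin_sq_add_cos_sq α
  have hpyθ := Real.sin_sq_add_cos_sq θ
  set D := Real.sin θ ^ 2 * Real.cos α ^ 2 + Real.cos θ ^ 2 * Real.sin α ^ 2 with hD
  have hDpos : 0 < D := by
    have h1 : 0 < Real.sin θ ^ 2 * Real.cos α ^ 2 := by positivity
    have h2 : 0 ≤ Real.cos θ ^ 2 * Real.sin α ^ 2 := by positivity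
    linarith
  -- key algebraic facts about g α
  have hgval : g α = Real.cos θ * Real.sin α / (Real.sin θ * Real.cos α) := by
    simp only [hg, Real.tan_eq_sin_div_cos]
    field_simp
  have h1g : 1 + (g α) ^ 2 = D / (Real.sin θ * Real.cos α) ^ 2 := by
    rw [hgval, hD]
    field_simp
  have h2g : 1 - (g α) ^ 2
      = (Real.sin θ ^ 2 * Real.cos α ^ 2 - Real.cos θ ^ 2 * Real.sin α ^ 2)
        / (Real.sin θ * Real.cos α) ^ 2 := by
    rw [hgval]
    field_simp
  have h3g : Real.cos θ ^ 2 + (g α) ^ 2 * Real.sin θ ^ 2 = (Real.cos θ / Real.cos α) ^ 2 := by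
    rw [hgval]
    field_simp
    linear_combination hpyα
  have hsqrt1 : Real.sqrt (1 + (g α) ^ 2) = Real.sqrt D / (Real.sin θ * Real.cos α) := by
    rw [h1g, Real.sqrt_div hDpos.le, Real.sqrt_sq (by positivity)]
  have hsqrt3 : Real.sqrt (Real.cos θ ^ 2 + (g α) ^ 2 * Real.sin θ ^ 2)
      = Real.cos θ / Real.cos α := by
    rw [h3g, Real.sqrt_sq (by positivity)]
  -- now the main pointwise identity
  simp only [Function.comp_apply, smul_eq_mul]
  rw [W, VV, hsqrt1, hsqrt3, h1g, h2g, ← hD]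
  have hsqD : 0 < Real.sqrt D := Real.sqrt_pos.2 hDpos
  have hsq2 : Real.sqrt D ^ 2 = D := Real.sq_sqrt hDpos.le
  field_simp

-- continuation: assumes hh, VV, W, lemmas from s3 and ftc from s1/s2
section Assembly
open ENNReal

lemma hh_meas : Measurable (fun x : ℝ × ℝ => hh (2*x.1 - x.2) x.2) := by
  unfold hh
  fun_prop

lemma W_meas : Measurable (Function.uncurry W) := by
  unfold Function.uncurry W
  fun_prop

lemma W_nonneg {u θ : ℝ} (hu : u^2 ≤ 1) : 0 ≤ W u θ := by
  unfold W
  have h1 : (0:ℝ) ≤ 1 - u^2 := by linarith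
  positivity

noncomputable def Jfun (u : ℝ) : ℝ := ∫ θ in Set.Ioo 0 (Real.pi/2), W u θ

lemma Jfun_meas : Measurable Jfun := by
  have := (W_meas.stronglyMeasurable).integral_prod_right'
    (ν := volume.restrict (Set.Ioo 0 (Real.pi/2)))
  exact this.measurable

lemma W_contθ {u : ℝ} (hu : u ≠ 0) : Continuous fun θ => W u θ := by
  unfold W
  apply Continuous.mul continuous_const
  apply Continuous.div continuous_const (by fun_prop)
  intro θ
  have hpy := Real.sin_sq_add_cos_sq θ
  have h1 : 0 < Real.cos θ ^ 2 + u ^ 2 * Real.sin θ ^ 2 := by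
    rcases eq_or_ne (Real.cos θ) 0 with h | h
    · have hsθ : Real.sin θ ^ 2 = 1 := by rw [h] at hpy; simpa using hpy
      rw [hsθ]
      have : 0 < u^2 := by positivity
      nlinarith [sq_nonneg (Real.cos θ)]
    · have : 0 < Real.cos θ ^ 2 := by positivity
      nlinarith [sq_nonneg u, sq_nonneg (Real.sin θ), mul_nonneg (sq_nonneg u) (sq_nonneg (Real.sin θ))]
  positivity

lemma hh_contθ {q : ℝ} (hq : Real.sin q ≠ 0) : Continuous fun θ => hh (2*θ - q) q := by
  unfold hh
  apply Continuous.div (by fun_prop) (by fun_prop)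
  intro θ
  have h1 : 0 < Real.sin (2*θ - q) ^ 2 + Real.sin q ^ 2 := by
    have : 0 < Real.sin q ^ 2 := by positivity
    nlinarith [sq_nonneg (Real.sin (2*θ - q))]
  positivity

end Assembly

section Assembly2
open ENNReal

/-- per θ: the Bochner inner integral transformed -/
lemma inner_theta {θ : ℝ} (hθ : θ ∈ Set.Ioo 0 (Real.pi/2)) :
    ∫ u in (-1:ℝ)..1, W u θ = ∫ q in (0:ℝ)..(2*θ), hh (2*θ - q) q := by
  rw [sub1 hθ]
  have hrefl := intervalIntegral.integral_comp_sub_left (a := (0:ℝ)) (b := 2*θ) (VV θ) θ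
  rw [show θ - 2*θ = -θ by ring, show θ - 0 = θ by ring] at hrefl
  rw [← hrefl]
  apply intervalIntegral.integral_congr
  intro q _
  exact Vh θ q

/-- per q: the Bochner inner integral computed -/
lemma inner_q {q : ℝ} (hq : q ∈ Set.Ioo 0 Real.pi) :
    ∫ θ in (q/2)..(Real.pi/2), hh (2*θ - q) q
      = (Real.cos q + Real.sqrt 2) / (1 + Real.sin q ^ 2) := by
  rw [sub2 q, ftc1 hq]
  field_simp

/-- nonnegativity of hh on the relevant region -/
lemma hh_nonneg {p q : ℝ} (hp : p ∈ Set.Icc 0 Real.pi) (hq : q ∈ Set.Icc 0 Real.pi) :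
    0 ≤ hh p q := by
  unfold hh
  have h1 : 0 ≤ Real.sin p := Real.sin_nonneg_of_nonneg_of_le_pi hp.1 hp.2
  have h2 : 0 ≤ Real.sin q := Real.sin_nonneg_of_nonneg_of_le_pi hq.1 hq.2
  positivity

end Assembly2
section Assembly3
open ENNReal

lemma hh_contq {θ : ℝ} (hθ : θ ∈ Set.Ioo 0 (Real.pi/2)) :
    Continuous fun q => hh (2*θ - q) q := by
  have h2θ : 0 < Real.sin (2*θ) := by
    apply Real.sin_pos_of_pos_of_lt_pi (by linarith [hθ.1]) (by linarith [hθ.2])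
  unfold hh
  apply Continuous.div (by fun_prop) (by fun_prop)
  intro q
  have hden : 0 < Real.sin (2*θ - q) ^ 2 + Real.sin q ^ 2 := by
    rcases lt_or_ge 0 (Real.sin (2*θ - q) ^ 2 + Real.sin q ^ 2) with h | h
    · exact h
    · exfalso
      have h1 : Real.sin (2*θ - q) = 0 := by nlinarith [sq_nonneg (Real.sin (2*θ - q)), sq_nonneg (Real.sin q)]
      have h2 : Real.sin q = 0 := by nlinarith [sq_nonneg (Real.sin (2*θ - q)), sq_nonneg (Real.sin q)]
      have : Real.sin (2*θ) = 0 := by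
        have := Real.sin_add (2*θ - q) q
        rw [show 2*θ - q + q = 2*θ by ring] at this
        rw [this, h1, h2]
        ring
      linarith
  positivity

lemma GG_meas : Measurable (Function.uncurry (fun θ q =>
    (Set.Ioo (0:ℝ) (2*θ)).indicator (fun q' => ENNReal.ofReal (hh (2*θ - q') q')) q)) := by
  have heq : (Function.uncurry (fun θ q =>
      (Set.Ioo (0:ℝ) (2*θ)).indicator (fun q' => ENNReal.ofReal (hh (2*θ - q') q')) q))
      = Set.indicator {x : ℝ × ℝ | 0 < x.2 ∧ x.2 < 2*x.1}
          (fun x => ENNReal.ofReal (hh (2*x.1 - x.2) x.2)) := by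
    ext x
    rw [Function.uncurry]
    rw [Set.indicator_apply, Set.indicator_apply]
    congr 1
  rw [heq]
  apply Measurable.indicator
  · exact (ENNReal.measurable_ofReal.comp hh_meas)
  · apply MeasurableSet.inter
    · exact measurableSet_lt measurable_const measurable_snd
    · exact measurableSet_lt measurable_snd (measurable_fst.const_mul 2)

lemma mainInt : ∫ u in Set.Ioo (-1:ℝ) 1, Jfun u = Real.pi := by
  set S₁ := Set.Ioo (-1:ℝ) 1 with hS₁
  set S₂ := Set.Ioo (0:ℝ) (Real.pi/2) with hS₂
  have hpi := Real.pi_pos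
  -- nonnegativity of Jfun a.e.
  have hnn : 0 ≤ᵐ[volume.restrict S₁] Jfun := by
    filter_upwards [ae_restrict_mem measurableSet_Ioo] with u hu
    have hu2 : u^2 ≤ 1 := by nlinarith [hu.1, hu.2]
    apply setIntegral_nonneg measurableSet_Ioo
    intro θ _
    exact W_nonneg hu2
  rw [MeasureTheory.integral_eq_lintegral_of_nonneg_ae hnn
    (Jfun_meas.aestronglyMeasurable)]
  have key : ∫⁻ u in S₁, ENNReal.ofReal (Jfun u) = ENNReal.ofReal Real.pi := by
    have h0ae : ∀ᵐ u ∂(volume.restrict S₁), u ≠ 0 := by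
      refine MeasureTheory.ae_restrict_of_ae ?_
      rw [MeasureTheory.ae_iff]
      convert MeasureTheory.measure_mono_null (fun x hx => ?_) (Real.volume_singleton (a := 0))
      · simp at hx
        simpa using hx
    calc ∫⁻ u in S₁, ENNReal.ofReal (Jfun u)
        = ∫⁻ u in S₁, ∫⁻ θ in S₂, ENNReal.ofReal (W u θ) := by
          apply lintegral_congr_ae
          filter_upwards [ae_restrict_mem measurableSet_Ioo, h0ae] with u hu hu0
          have hu2 : u^2 ≤ 1 := by nlinarith [hu.1, hu.2]
          rw [Jfun]
          rw [← MeasureTheory.ofReal_integral_eq_lintegral_ofReal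
            (((W_contθ hu0).integrableOn_Icc).mono_set Set.Ioo_subset_Icc_self)
            (Filter.Eventually.of_forall (fun θ => W_nonneg hu2))]
      _ = ∫⁻ θ in S₂, ∫⁻ u in S₁, ENNReal.ofReal (W u θ) := by
          apply MeasureTheory.lintegral_lintegral_swap
          exact ((ENNReal.measurable_ofReal.comp W_meas)).aemeasurable
      _ = ∫⁻ θ in S₂, ∫⁻ q in Set.Ioo (0:ℝ) Real.pi,
            (Set.Ioo (0:ℝ) (2*θ)).indicator (fun q' => ENNReal.ofReal (hh (2*θ - q') q')) q := by
          apply lintegral_congr_ae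
          filter_upwards [ae_restrict_mem measurableSet_Ioo] with θ hθ
          have hθ' : θ ∈ Set.Ioo 0 (Real.pi/2) := hθ
          have h1 : ∫⁻ u in S₁, ENNReal.ofReal (W u θ)
              = ENNReal.ofReal (∫ u in (-1:ℝ)..1, W u θ) := by
            rw [intervalIntegral.integral_of_le (by norm_num : (-1:ℝ) ≤ 1),
              MeasureTheory.integral_Ioc_eq_integral_Ioo]
            rw [← MeasureTheory.ofReal_integral_eq_lintegral_ofReal
              (((W_cont hθ').integrableOn_Icc).mono_set Set.Ioo_subset_Icc_self)]
            filter_upwards [ae_restrict_mem measurableSet_Ioo] with u hu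
            have hu2 : u^2 ≤ 1 := by nlinarith [hu.1, hu.2]
            exact W_nonneg hu2
          rw [h1, inner_theta hθ']
          have h2 : ∫ q in (0:ℝ)..(2*θ), hh (2*θ - q) q
              = ∫ q in Set.Ioo (0:ℝ) (2*θ), hh (2*θ - q) q := by
            rw [intervalIntegral.integral_of_le (by linarith [hθ'.1]),
              MeasureTheory.integral_Ioc_eq_integral_Ioo]
          rw [h2]
          have hnn2 : 0 ≤ᵐ[volume.restrict (Set.Ioo (0:ℝ) (2*θ))]
              fun q => hh (2*θ - q) q := by
            filter_upwards [ae_restrict_mem measurableSet_Ioo] with q hq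
            apply hh_nonneg
            · constructor <;> [linarith [hq.2]; linarith [hq.1, hθ'.2]]
            · constructor <;> [linarith [hq.1]; linarith [hq.2, hθ'.2]]
          rw [MeasureTheory.ofReal_integral_eq_lintegral_ofReal
            (((hh_contq hθ').integrableOn_Icc).mono_set Set.Ioo_subset_Icc_self) hnn2]
          rw [MeasureTheory.lintegral_indicator measurableSet_Ioo,
            MeasureTheory.Measure.restrict_restrict measurableSet_Ioo]
          have hsub : Set.Ioo (0:ℝ) (2*θ) ⊆ Set.Ioo 0 Real.pi :=
            fun q hq => ⟨hq.1, by linarith [hq.2, hθ'.2]⟩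
          rw [Set.inter_eq_left.mpr hsub]
      _ = ∫⁻ q in Set.Ioo (0:ℝ) Real.pi, ∫⁻ θ in S₂,
            (Set.Ioo (0:ℝ) (2*θ)).indicator (fun q' => ENNReal.ofReal (hh (2*θ - q') q')) q := by
          apply MeasureTheory.lintegral_lintegral_swap
          exact GG_meas.aemeasurable
      _ = ∫⁻ q in Set.Ioo (0:ℝ) Real.pi,
            ENNReal.ofReal ((Real.cos q + Real.sqrt 2) / (1 + Real.sin q ^ 2)) := by
          apply lintegral_congr_ae
          filter_upwards [ae_restrict_mem measurableSet_Ioo] with q hq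
          have hq' : q ∈ Set.Ioo 0 Real.pi := hq
          have hsinq : 0 < Real.sin q := Real.sin_pos_of_pos_of_lt_pi hq'.1 hq'.2
          have hstep : ∀ θ ∈ S₂,
              (Set.Ioo (0:ℝ) (2*θ)).indicator (fun q' => ENNReal.ofReal (hh (2*θ - q') q')) q
              = (Set.Ioi (q/2)).indicator (fun θ' => ENNReal.ofReal (hh (2*θ' - q) q)) θ := by
            intro θ hθ
            rw [Set.indicator_apply, Set.indicator_apply]
            have : q ∈ Set.Ioo (0:ℝ) (2*θ) ↔ θ ∈ Set.Ioi (q/2) := by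
              constructor
              · intro h; exact Set.mem_Ioi.2 (by have := h.2; linarith)
              · intro h
                exact ⟨hq'.1, by have := Set.mem_Ioi.1 h; linarith⟩
            rcases this with ⟨h1, h2⟩
            by_cases hmem : q ∈ Set.Ioo (0:ℝ) (2*θ)
            · rw [if_pos hmem, if_pos (h1 hmem)]
            · rw [if_neg hmem, if_neg (fun h => hmem (h2 h))]
          rw [MeasureTheory.setLIntegral_congr_fun measurableSet_Ioo
            hstep]
          rw [MeasureTheory.lintegral_indicator measurableSet_Ioi,
            MeasureTheory.Measure.restrict_restrict measurableSet_Ioi]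
          have hint : Set.Ioi (q/2) ∩ S₂ = Set.Ioo (q/2) (Real.pi/2) := by
            ext θ
            simp only [Set.mem_inter_iff, Set.mem_Ioi, Set.mem_Ioo, hS₂]
            constructor
            · rintro ⟨h1, _, h3⟩; exact ⟨h1, h3⟩
            · rintro ⟨h1, h2⟩; exact ⟨h1, by linarith [hq'.1], h2⟩
          rw [hint]
          have hnn3 : 0 ≤ᵐ[volume.restrict (Set.Ioo (q/2) (Real.pi/2))]
              fun θ => hh (2*θ - q) q := by
            filter_upwards [ae_restrict_mem measurableSet_Ioo] with θ hθ
            apply hh_nonneg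
            · constructor <;> [linarith [hθ.1]; linarith [hθ.2, hq'.1]]
            · constructor <;> [linarith [hq'.1]; linarith [hq'.2]]
          rw [← MeasureTheory.ofReal_integral_eq_lintegral_ofReal
            (((hh_contθ hsinq.ne').integrableOn_Icc).mono_set Set.Ioo_subset_Icc_self) hnn3]
          congr 1
          rw [← MeasureTheory.integral_Ioc_eq_integral_Ioo,
            ← intervalIntegral.integral_of_le (by linarith [hq'.2] : q/2 ≤ Real.pi/2)]
          exact inner_q hq'
      _ = ENNReal.ofReal Real.pi := by
          rw [← MeasureTheory.ofReal_integral_eq_lintegral_ofReal]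
          · rw [← MeasureTheory.integral_Ioc_eq_integral_Ioo,
              ← intervalIntegral.integral_of_le hpi.le]
            rw [ftc2]
          · apply ((Continuous.integrableOn_Icc ?_).mono_set Set.Ioo_subset_Icc_self)
            exact Continuous.div (by fun_prop) cont_den (fun q => (den_pos q).ne')
          · apply Filter.Eventually.of_forall
            intro q
            have h2 : (1:ℝ) < Real.sqrt 2 := by
              rw [show (1:ℝ) = Real.sqrt 1 by simp]
              exact Real.sqrt_lt_sqrt (by norm_num) (by norm_num)
            have := Real.neg_one_le_cos q
            apply div_nonneg
            · linarith
            · positivity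
  rw [key, ENNReal.toReal_ofReal hpi.le]
end Assembly3
section Final

lemma K_eq {u : ℝ} (hu : u^2 ≤ 1) :
    K (Real.sqrt (1 - u^2))
      = ∫ θ in Set.Ioo 0 (Real.pi/2), (1 / Real.sqrt (Real.cos θ^2 + u^2 * Real.sin θ^2)) := by
  rw [K]
  congr 1
  funext θ
  rw [Real.sq_sqrt (by linarith : (0:ℝ) ≤ 1 - u^2)]
  congr 2
  linear_combination (-1 : ℝ) * Real.sin_sq_add_cos_sq θ

lemma J_eq {u : ℝ} (hu : u^2 ≤ 1) :
    K (Real.sqrt (1 - u^2)) * ((1-u^2) / ((1+u^2) * Real.sqrt (1+u^2))) = Jfun u := by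
  rw [Jfun, K_eq hu, mul_comm, ← MeasureTheory.integral_const_mul]
  rfl

lemma point_eq {u : ℝ} (hu : u^2 ≤ 1) :
    K (2 * Real.sqrt ((1/2*u+1/2) * (1 - (1/2*u+1/2)))) * ((1/2*u+1/2) * (1 - (1/2*u+1/2))) /
      (1 - 2*(1/2*u+1/2)*(1 - (1/2*u+1/2))) ^ ((3:ℝ)/2)
    = Real.sqrt 2 / 2 * (K (Real.sqrt (1-u^2)) * ((1-u^2)/((1+u^2)*Real.sqrt (1+u^2)))) := by
  have hx : (1/2*u+1/2) * (1 - (1/2*u+1/2)) = (1-u^2)/4 := by ring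
  have hd : 1 - 2*(1/2*u+1/2)*(1 - (1/2*u+1/2)) = (1+u^2)/2 := by ring
  rw [hx, hd]
  have h4 : Real.sqrt ((1-u^2)/4) = Real.sqrt (1-u^2) / 2 := by
    rw [Real.sqrt_div (by linarith : (0:ℝ) ≤ 1-u^2) 4,
      show Real.sqrt 4 = 2 by
        rw [show (4:ℝ) = 2^2 by norm_num, Real.sqrt_sq (by norm_num : (0:ℝ) ≤ 2)]]
  rw [h4, show 2 * (Real.sqrt (1-u^2)/2) = Real.sqrt (1-u^2) by ring]
  have hpos : (0:ℝ) < (1+u^2)/2 := by positivity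
  have hrpow : ((1+u^2)/2) ^ ((3:ℝ)/2) = ((1+u^2)/2) * Real.sqrt ((1+u^2)/2) := by
    rw [show (3:ℝ)/2 = 1 + 1/2 by norm_num, Real.rpow_add hpos, Real.rpow_one]
    congr 1
    rw [Real.sqrt_eq_rpow]
  have hsq2 : Real.sqrt ((1+u^2)/2) = Real.sqrt (1+u^2)/Real.sqrt 2 :=
    Real.sqrt_div (by positivity) 2
  rw [hrpow, hsq2]
  have ha : 0 < Real.sqrt 2 := by positivity
  have hb : 0 < Real.sqrt (1+u^2) := by positivity
  have ha2 : Real.sqrt 2 * Real.sqrt 2 = 2 := Real.mul_self_sqrt (by norm_num)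
  field_simp
  ring_nf

end Final
theorem stmt18 :
    ∫ x in (0:ℝ)..1, K (2 * Real.sqrt (x * (1 - x))) * (x * (1 - x)) /
        (1 - 2 * x * (1 - x)) ^ ((3:ℝ)/2) =
      Real.pi / (2 * Real.sqrt 2) := by
  have hsub := intervalIntegral.integral_comp_mul_add (a := (-1:ℝ)) (b := 1)
    (c := (1/2:ℝ))
    (f := fun x => K (2 * Real.sqrt (x * (1 - x))) * (x * (1 - x)) /
        (1 - 2 * x * (1 - x)) ^ ((3:ℝ)/2)) (by norm_num) (1/2)
  rw [show (1/2:ℝ) * (-1) + 1/2 = 0 by norm_num, show (1/2:ℝ) * 1 + 1/2 = 1 by norm_num,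
    show ((1/2:ℝ))⁻¹ = 2 by norm_num] at hsub
  have hcongr : (∫ u in (-1:ℝ)..1, (fun x => K (2 * Real.sqrt (x * (1 - x))) * (x * (1 - x)) /
        (1 - 2 * x * (1 - x)) ^ ((3:ℝ)/2)) (1/2 * u + 1/2))
      = ∫ u in (-1:ℝ)..1, Real.sqrt 2/2 * Jfun u := by
    apply intervalIntegral.integral_congr
    intro u hu
    rw [Set.uIcc_of_le (by norm_num : (-1:ℝ) ≤ 1)] at hu
    have hu2 : u^2 ≤ 1 := by nlinarith [hu.1, hu.2]
    simp only []
    rw [point_eq hu2, J_eq hu2]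
  rw [hcongr] at hsub
  have hJ : ∫ u in (-1:ℝ)..1, Real.sqrt 2/2 * Jfun u = Real.sqrt 2/2 * Real.pi := by
    rw [intervalIntegral.integral_const_mul, intervalIntegral.integral_of_le (by norm_num),
      MeasureTheory.integral_Ioc_eq_integral_Ioo, mainInt]
  rw [hJ, smul_eq_mul] at hsub
  have hres : ∫ x in (0:ℝ)..1, K (2 * Real.sqrt (x * (1 - x))) * (x * (1 - x)) /
      (1 - 2 * x * (1 - x)) ^ ((3:ℝ)/2) = Real.sqrt 2/2 * Real.pi / 2 := by
    linarith [hsub]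
  rw [hres]
  have ha2 : Real.sqrt 2 ^ 2 = 2 := Real.sq_sqrt (by norm_num)
  have ha : (0:ℝ) < Real.sqrt 2 := by positivity
  field_simp
  have hm : Real.sqrt 2 * Real.sqrt 2 = 2 := Real.mul_self_sqrt (by norm_num)
  linear_combination hm
end
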